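/- arXiv:1605.03113 — 7 statements merged into one kernel-verified Lean document; each statement's English description precedes it below -/
import Mathlib

section
/- Let k be an algebraically closed field of characteristic 0, let n ≥ 1, and let q_{ij} ∈ k be nonzero scalars (1 ≤ i,j ≤ n) such that q_{ij}·q_{ji} = 1 for all i ≠ j and such that each diagonal entry q_{ii} is a primitive N_i-th root of unity with N_i ≥ 2. Let λ_{ij} ∈ k (for i < j) be scalars satisfying: λ_{ij} = 0 unless q_{ki}·q_{kj} = 1 for every k ∈ {1,…,n}. Then the quotient of the free associative unital algebra k⟨y_1,…,y_n⟩ by the two-sided ideal generated by the elements y_i y_j − q_{ij} y_j y_i − λ_{ij}·1 (for all i < j) together with the elements y_i^{N_i} (for all i) is a nontrivial algebra, i.e. 1 does not lie in that ideal. -/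
namespace QCliff

variable {k : Type*} [Field k] {n : ℕ}

/-- geometric sum `(ζ^t - 1)/(ζ - 1)` for `t : ℤ`. -/
noncomputable def S (ζ : k) (t : ℤ) : k := (ζ ^ t - 1) / (ζ - 1)

/-- `e r` = indicator lattice vector -/
def e (r : Fin n) : Fin n → ℤ := Pi.single r 1

/-- twisted string `∏_{t<c} q i t ^ b t` -/
noncomputable def str (q : Fin n → Fin n → k) (i c : Fin n) (b : Fin n → ℤ) : k :=
  ∏ t ∈ Finset.univ.filter (· < c), q i t ^ b t

open Classical in
/-- indicator coefficient for the raising part -/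
noncomputable def ind (N : Fin n → ℕ) (lam : Fin n → Fin n → k) (i : Fin n) (t : ℤ) : k :=
  if (∃ j, i < j ∧ lam i j ≠ 0) ∧ ¬ ((N i : ℤ) ∣ t + 1) then 1 else 0

noncomputable def Ac (q : Fin n → Fin n → k) (N : Fin n → ℕ) (lam : Fin n → Fin n → k)
    (i : Fin n) (b : Fin n → ℤ) : k :=
  ind N lam i (b i) * str q i i b

noncomputable def Bc (q : Fin n → Fin n → k) (lam : Fin n → Fin n → k)
    (i l : Fin n) (b : Fin n → ℤ) : k :=
  -(lam l i) * (q l l * (S (q l l) (b l) * str q i l b))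

section shifts

variable (q : Fin n → Fin n → k) (N : Fin n → ℕ) (lam : Fin n → Fin n → k)
variable {i l r c : Fin n} (b : Fin n → ℤ)

lemma add_e_apply_self : (b + e r) r = b r + 1 := by simp [e]

lemma add_e_apply_ne (h : i ≠ r) : (b + e r) i = b i := by
  simp [e, Pi.single_apply, h]

lemma sub_e_apply_self : (b - e r) r = b r - 1 := by simp [e]

lemma sub_e_apply_ne (h : i ≠ r) : (b - e r) i = b i := by
  simp [e, Pi.single_apply, h]

lemma str_add (h0 : ∀ a bb, q a bb ≠ 0) (h : r < c) :
    str q i c (b + e r) = q i r * str q i c b := by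
  unfold str
  rw [show (q i r) = ∏ t ∈ Finset.univ.filter (· < c), if t = r then q i t else 1 by
    rw [Finset.prod_ite_eq']; simp [h]]
  rw [← Finset.prod_mul_distrib]
  refine Finset.prod_congr rfl fun t _ => ?_
  rcases eq_or_ne t r with rfl | ht
  · rw [if_pos rfl, add_e_apply_self, zpow_add_one₀ (h0 i t), mul_comm]
  · simp only [if_neg ht, one_mul, add_e_apply_ne _ ht]

lemma str_add' (h : ¬ r < c) : str q i c (b + e r) = str q i c b := by
  unfold str
  refine Finset.prod_congr rfl fun t ht => ?_
  rw [add_e_apply_ne]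
  rintro rfl
  exact h (Finset.mem_filter.mp ht).2

lemma str_sub (h0 : ∀ a bb, q a bb ≠ 0) (h : r < c) :
    str q i c (b - e r) = (q i r)⁻¹ * str q i c b := by
  have := str_add q (b - e r) h0 h (i := i)
  rw [sub_add_cancel] at this
  rw [this]; field_simp [h0 i r]

lemma str_sub' (h : ¬ r < c) : str q i c (b - e r) = str q i c b := by
  unfold str
  refine Finset.prod_congr rfl fun t ht => ?_
  rw [sub_e_apply_ne]
  rintro rfl
  exact h (Finset.mem_filter.mp ht).2

-- shift lemmas for Ac
lemma Ac_add_ne (h1 : i ≠ r) (h : ¬ r < i) : Ac q N lam i (b + e r) = Ac q N lam i b := by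
  unfold Ac; rw [add_e_apply_ne _ h1, str_add' _ _ h]

lemma Ac_sub_ne (h1 : i ≠ r) (h : ¬ r < i) : Ac q N lam i (b - e r) = Ac q N lam i b := by
  unfold Ac; rw [sub_e_apply_ne _ h1, str_sub' _ _ h]

lemma Ac_add_lt (h0 : ∀ a bb, q a bb ≠ 0) (h : r < i) :
    Ac q N lam i (b + e r) = q i r * Ac q N lam i b := by
  unfold Ac; rw [add_e_apply_ne _ (ne_of_gt h), str_add _ _ h0 h]; ring

lemma Ac_sub_lt (h0 : ∀ a bb, q a bb ≠ 0) (h : r < i) :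
    Ac q N lam i (b - e r) = (q i r)⁻¹ * Ac q N lam i b := by
  unfold Ac; rw [sub_e_apply_ne _ (ne_of_gt h), str_sub _ _ h0 h]; ring

lemma Ac_add_self : Ac q N lam i (b + e i) = ind N lam i (b i + 1) * str q i i b := by
  unfold Ac; rw [add_e_apply_self, str_add' _ _ (lt_irrefl i)]

lemma Ac_sub_self : Ac q N lam i (b - e i) = ind N lam i (b i - 1) * str q i i b := by
  unfold Ac; rw [sub_e_apply_self, str_sub' _ _ (lt_irrefl i)]

-- shift lemmas for Bc
lemma Bc_add_ne (h1 : l ≠ r) (h : ¬ r < l) : Bc q lam i l (b + e r) = Bc q lam i l b := by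
  unfold Bc; rw [add_e_apply_ne _ h1, str_add' _ _ h]

lemma Bc_sub_ne (h1 : l ≠ r) (h : ¬ r < l) : Bc q lam i l (b - e r) = Bc q lam i l b := by
  unfold Bc; rw [sub_e_apply_ne _ h1, str_sub' _ _ h]

lemma Bc_add_lt (h0 : ∀ a bb, q a bb ≠ 0) (h : r < l) :
    Bc q lam i l (b + e r) = q i r * Bc q lam i l b := by
  unfold Bc; rw [add_e_apply_ne _ (ne_of_gt h), str_add _ _ h0 h]; ring

lemma Bc_sub_lt' (h0 : ∀ a bb, q a bb ≠ 0) (h : r < l) :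
    Bc q lam i l (b - e r) = (q i r)⁻¹ * Bc q lam i l b := by
  unfold Bc; rw [sub_e_apply_ne _ (ne_of_gt h), str_sub _ _ h0 h]; ring

lemma Bc_add_self : Bc q lam i l (b + e l) =
    -(lam l i) * (q l l * (S (q l l) (b l + 1) * str q i l b)) := by
  unfold Bc; rw [add_e_apply_self, str_add' _ _ (lt_irrefl l)]

lemma Bc_sub_self : Bc q lam i l (b - e l) =
    -(lam l i) * (q l l * (S (q l l) (b l - 1) * str q i l b)) := by
  unfold Bc; rw [sub_e_apply_self, str_sub' _ _ (lt_irrefl l)]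

end shifts





lemma S_zero_of_dvd {ζ : k} {M : ℕ} (hp : IsPrimitiveRoot ζ M) {t : ℤ} (h : (M:ℤ) ∣ t) :
    S ζ t = 0 := by
  unfold S
  rw [(hp.zpow_eq_one_iff_dvd t).2 h]
  simp

lemma S_mul_S_pred {t : ℤ} : S (-1 : k) t * S (-1 : k) (t - 1) = 0 := by
  have key : ∀ s : ℤ, (2:ℤ) ∣ s → S (-1 : k) s = 0 := by
    intro s ⟨c, hc⟩
    unfold S
    rw [hc, zpow_mul]
    norm_num
  rcases Int.even_or_odd t with ⟨c, hc⟩ | ⟨c, hc⟩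
  · rw [key t ⟨c, by omega⟩, zero_mul]
  · rw [key (t-1) ⟨c, by omega⟩, mul_zero]

lemma rec_lemma {ζ : k} {M : ℕ} (hM : 2 ≤ M) (hp : IsPrimitiveRoot ζ M) (t : ℤ) :
    (if (M:ℤ) ∣ t + 1 then (0:k) else 1) * S ζ (t+1)
      - ζ * S ζ t * (if (M:ℤ) ∣ t then (0:k) else 1) = 1 := by
  have hζ0 : ζ ≠ 0 := hp.ne_zero (by omega)
  have hζ1 : ζ ≠ 1 := hp.ne_one (by omega)
  have hd : ζ - 1 ≠ 0 := sub_ne_zero.mpr hζ1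
  have hstep : ζ ^ (t+1) = ζ ^ t * ζ := zpow_add_one₀ hζ0 t
  by_cases h1 : (M:ℤ) ∣ t + 1
  · have h2 : ¬ (M:ℤ) ∣ t := by
      intro h2
      have hd1 : (M:ℤ) ∣ 1 := by simpa using dvd_sub h1 h2
      have := Int.le_of_dvd one_pos hd1
      omega
    rw [if_pos h1, if_neg h2, zero_mul, zero_sub]
    have hone : ζ ^ t * ζ = 1 := by rw [← hstep]; exact (hp.zpow_eq_one_iff_dvd _).2 h1
    unfold S
    field_simp
    linear_combination -hone
  · by_cases h0 : (M:ℤ) ∣ t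
    · rw [if_pos h0, if_neg h1, mul_zero, sub_zero, one_mul]
      have hone : ζ ^ t = 1 := (hp.zpow_eq_one_iff_dvd _).2 h0
      unfold S
      rw [hstep, hone]
      field_simp
    · rw [if_neg h0, if_neg h1, mul_one, one_mul]
      unfold S
      rw [hstep]
      field_simp
      ring




section ops

variable (q : Fin n → Fin n → k) (N : Fin n → ℕ) (lam : Fin n → Fin n → k)

abbrev V (k : Type*) [Field k] (n : ℕ) := (Fin n → ℤ) →₀ k

noncomputable def vec (i : Fin n) (b : Fin n → ℤ) : V k n :=
  Finsupp.single (b + e i) (Ac q N lam i b)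
  + ∑ l ∈ Finset.univ.filter (· < i), Finsupp.single (b - e l) (Bc q lam i l b)

noncomputable def Y (i : Fin n) : V k n →ₗ[k] V k n :=
  Finsupp.lsum k fun b => LinearMap.toSpanSingleton k _ (vec q N lam i b)

@[simp] lemma Y_single (i : Fin n) (b : Fin n → ℤ) (c : k) :
    Y q N lam i (Finsupp.single b c) = c • vec q N lam i b := by
  simp [Y, LinearMap.toSpanSingleton_apply]

end ops

section scalars

variable {q : Fin n → Fin n → k} {N : Fin n → ℕ} {lam : Fin n → Fin n → k}
variable {i j l m : Fin n} (b : Fin n → ℤ)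

lemma mul_cancel_eq {a b c : k} (hc : c ≠ 0) (h1 : a * c = 1) (h2 : b * c = 1) : a = b := by
  have h3 : (a - b) * c = 0 := by linear_combination h1 - h2
  rcases mul_eq_zero.mp h3 with h | h
  · exact sub_eq_zero.mp h
  · exact absurd h hc

lemma str_mul (hsym : ∀ a b, a ≠ b → q a b * q b a = 1)
    (hij : i < j) (H : ∀ t, q t i * q t j = 1) :
    str q i i b * str q j i b = 1 := by
  unfold str
  rw [← Finset.prod_mul_distrib]
  apply Finset.prod_eq_one
  intro t ht
  have hti : t < i := by simpa using ht
  rw [← mul_zpow]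
  have h1 : q i t * q j t = 1 := by
    calc q i t * q j t = (q i t * q j t) * ((q t i) * (q t j)) := by rw [H t, mul_one]
    _ = (q i t * q t i) * (q j t * q t j) := by ring
    _ = 1 := by
        rw [hsym i t (ne_of_gt hti), hsym j t (ne_of_gt (hti.trans hij)), mul_one]
  rw [h1, one_zpow]

lemma ind_eq_of_up (hup : ∃ j, i < j ∧ lam i j ≠ 0) (t : ℤ) :
    ind N lam i t = if ((N i : ℤ)) ∣ t + 1 then (0:k) else 1 := by
  unfold ind
  by_cases hd : ((N i : ℤ)) ∣ t + 1 <;> simp [hup, hd]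

end scalars


section Escalars
variable {q : Fin n → Fin n → k} {N : Fin n → ℕ} {lam : Fin n → Fin n → k}
variable {i j l m : Fin n}

lemma scalarE1 (h0 : ∀ a b, q a b ≠ 0) (hsym : ∀ a b, a ≠ b → q a b * q b a = 1)
    (hij : i < j) (b : Fin n → ℤ) :
    Ac q N lam j b * Ac q N lam i (b + e j) = q i j * (Ac q N lam i b * Ac q N lam j (b + e i)) := by
  rw [Ac_add_ne q N lam b (ne_of_lt hij) (fun h => absurd (h.trans hij) (lt_irrefl j)),
    Ac_add_lt q N lam b h0 hij]
  linear_combination (-(Ac q N lam i b * Ac q N lam j b)) * hsym i j (ne_of_lt hij)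

lemma scalarE2 (h0 : ∀ a b, q a b ≠ 0) (hsym : ∀ a b, a ≠ b → q a b * q b a = 1)
    (hcon : ∀ a c, a < c → lam a c ≠ 0 → ∀ t, q t a * q t c = 1)
    (hli : l < i) (hij : i < j) (b : Fin n → ℤ) :
    Ac q N lam j b * Bc q lam i l (b + e j) = q i j * (Bc q lam i l b * Ac q N lam j (b - e l)) := by
  by_cases hlz : lam l i = 0
  · simp [Bc, hlz]
  have H := hcon l i hli hlz
  rw [Bc_add_ne q lam b (ne_of_lt (hli.trans hij)) (fun h => absurd ((hli.trans hij).trans h) (lt_irrefl l)),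
    Ac_sub_lt q N lam b h0 (hli.trans hij)]
  have hinv : (q j l)⁻¹ = q j i := inv_eq_of_mul_eq_one_right (H j)
  rw [hinv]
  linear_combination (-(Bc q lam i l b * Ac q N lam j b)) * hsym i j (ne_of_lt hij)

lemma scalarE3a (h0 : ∀ a b, q a b ≠ 0)
    (hcon : ∀ a c, a < c → lam a c ≠ 0 → ∀ t, q t a * q t c = 1)
    (hmi : m < i) (hij : i < j) (b : Fin n → ℤ) :
    Bc q lam j m b * Ac q N lam i (b - e m) = q i j * (Ac q N lam i b * Bc q lam j m (b + e i)) := by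
  by_cases hlz : lam m j = 0
  · simp [Bc, hlz]
  have H := hcon m j (hmi.trans hij) hlz
  rw [Ac_sub_lt q N lam b h0 hmi,
    Bc_add_ne q lam b (ne_of_lt hmi) (fun h => absurd (hmi.trans h) (lt_irrefl m)),
    inv_eq_of_mul_eq_one_right (H i)]
  ring

lemma scalarE3b (h0 : ∀ a b, q a b ≠ 0) (hsym : ∀ a b, a ≠ b → q a b * q b a = 1)
    (him : i < m) (hmj : m < j) (b : Fin n → ℤ) :
    Bc q lam j m b * Ac q N lam i (b - e m) = q i j * (Ac q N lam i b * Bc q lam j m (b + e i)) := by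
  rw [Ac_sub_ne q N lam b (ne_of_lt him) (fun h => absurd (him.trans h) (lt_irrefl i)),
    Bc_add_lt q lam b h0 him]
  linear_combination (-(Ac q N lam i b * Bc q lam j m b)) * hsym i j (ne_of_lt (him.trans hmj))
end Escalars

section Escalars2
variable {q : Fin n → Fin n → k} {N : Fin n → ℕ} {lam : Fin n → Fin n → k}
variable {i j l m : Fin n}

lemma eq_neg_one_of_sq {a : k} (h1 : a * a = 1) (h2 : a ≠ 1) : a = -1 := by
  have h3 : (a - 1) * (a + 1) = 0 := by linear_combination h1
  rcases mul_eq_zero.mp h3 with h | h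
  · exact absurd (sub_eq_zero.mp h) h2
  · exact eq_neg_of_add_eq_zero_left h

/-- the ★ identity -/
lemma scalarStar (h0 : ∀ a b, q a b ≠ 0) (hsym : ∀ a b, a ≠ b → q a b * q b a = 1)
    (hcon : ∀ a c, a < c → lam a c ≠ 0 → ∀ t, q t a * q t c = 1)
    (hprim : IsPrimitiveRoot (q i i) (N i)) (hNi : 2 ≤ N i)
    (hij : i < j) (b : Fin n → ℤ) :
    Bc q lam j i b * Ac q N lam i (b - e i)
      = q i j * (Ac q N lam i b * Bc q lam j i (b + e i)) + lam i j := by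
  by_cases hlz : lam i j = 0
  · simp [Bc, hlz]
  have H := hcon i j hij hlz
  have hup : ∃ j', i < j' ∧ lam i j' ≠ 0 := ⟨j, hij, hlz⟩
  have hP : str q i i b * str q j i b = 1 := str_mul b hsym hij H
  have hc : q i i * q i j = 1 := H i
  have hrec : ind N lam i (b i) * S (q i i) (b i + 1)
      - q i i * S (q i i) (b i) * ind N lam i (b i - 1) = 1 := by
    rw [ind_eq_of_up hup, ind_eq_of_up hup, show b i - 1 + 1 = b i by ring]
    exact rec_lemma hNi hprim (b i)
  rw [Ac_sub_self, Bc_add_self]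
  unfold Ac Bc
  set I := str q i i b
  set J := str q j i b
  set d0 := ind N lam i (b i)
  set dm := ind N lam i (b i - 1)
  set s0 := S (q i i) (b i)
  set s1 := S (q i i) (b i + 1)
  linear_combination (lam i j * d0 * s1 * I * J) * hc
    + (lam i j * I * J) * hrec + lam i j * hP
end Escalars2

section Escalars3
variable {q : Fin n → Fin n → k} {N : Fin n → ℕ} {lam : Fin n → Fin n → k}
variable {i j l m : Fin n}

lemma scalarE4 (h0 : ∀ a b, q a b ≠ 0) (hsym : ∀ a b, a ≠ b → q a b * q b a = 1)
    (hcon : ∀ a c, a < c → lam a c ≠ 0 → ∀ t, q t a * q t c = 1)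
    (hprimL : ∀ a, IsPrimitiveRoot (q a a) (N a)) (hNall : ∀ a, 2 ≤ N a)
    (hli : l < i) (hmj : m < j) (hij : i < j) (b : Fin n → ℤ) :
    Bc q lam j m b * Bc q lam i l (b - e m)
      = q i j * (Bc q lam i l b * Bc q lam j m (b - e l)) := by
  by_cases hlz1 : lam l i = 0
  · simp [Bc, hlz1]
  by_cases hlz2 : lam m j = 0
  · simp [Bc, hlz2]
  have H1 := hcon l i hli hlz1
  have H2 := hcon m j hmj hlz2
  rcases lt_trichotomy l m with hlm | rfl | hml
  · rw [Bc_sub_ne q lam b (ne_of_lt hlm) (fun h => absurd (hlm.trans h) (lt_irrefl l)),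
      Bc_sub_lt' q lam b h0 hlm, inv_eq_of_mul_eq_one_right (H1 j)]
    linear_combination (-(Bc q lam i l b * Bc q lam j m b)) * hsym i j (ne_of_lt hij)
  · -- l = m : both sides vanish since q l l = -1
    have hil : q i l = q l l :=
      mul_cancel_eq (h0 l i) (hsym i l (ne_of_gt hli)) (H1 l)
    have e2 : q l l * q i j = 1 := by
      have := H2 i; rw [hil] at this; exact this
    have hji : q j i = q l j :=
      mul_cancel_eq (h0 j l) (by linear_combination H1 j) (hsym l j (ne_of_lt (hli.trans hij)))
    have e1 : q i j = q l l := by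
      refine mul_cancel_eq (h0 l j) ?_ (H2 l)
      rw [← hji]; exact hsym i j (ne_of_lt hij)
    have hsq : q l l * q l l = 1 := by rw [← e1] at e2 ⊢; exact e2
    have hne1 : q l l ≠ 1 := (hprimL l).ne_one (by have := hNall l; omega)
    have hm1 : q l l = -1 := eq_neg_one_of_sq hsq hne1
    rw [Bc_sub_self, Bc_sub_self]
    unfold Bc
    rw [hm1]
    have hS := S_mul_S_pred (k := k) (t := b l)
    linear_combination
      (lam l j * lam l i * str q j l b * str q i l b * (1 - q i j)) * hS
  · rw [Bc_sub_lt' q lam b h0 hml,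
      Bc_sub_ne q lam b (ne_of_lt hml) (fun h => absurd (hml.trans h) (lt_irrefl m)),
      inv_eq_of_mul_eq_one_right (H2 i)]
    ring
end Escalars3

section comm
variable {q : Fin n → Fin n → k} {N : Fin n → ℕ} {lam : Fin n → Fin n → k}

lemma Y_vec (i' j' : Fin n) (b : Fin n → ℤ) :
    Y q N lam i' (vec q N lam j' b) =
      Finsupp.single (b + e j' + e i') (Ac q N lam j' b * Ac q N lam i' (b + e j'))
      + ∑ l ∈ Finset.univ.filter (· < i'),
          Finsupp.single (b + e j' - e l) (Ac q N lam j' b * Bc q lam i' l (b + e j'))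
      + (∑ m ∈ Finset.univ.filter (· < j'),
          Finsupp.single (b - e m + e i') (Bc q lam j' m b * Ac q N lam i' (b - e m))
      + ∑ m ∈ Finset.univ.filter (· < j'), ∑ l ∈ Finset.univ.filter (· < i'),
          Finsupp.single (b - e m - e l) (Bc q lam j' m b * Bc q lam i' l (b - e m))) := by
  simp only [vec, map_add, map_sum, Y_single, smul_add, Finset.smul_sum,
    Finsupp.smul_single, smul_eq_mul, Finset.sum_add_distrib]

variable {i j : Fin n}

lemma comm_aux (h0 : ∀ a b, q a b ≠ 0) (hsym : ∀ a b, a ≠ b → q a b * q b a = 1)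
    (hcon : ∀ a c, a < c → lam a c ≠ 0 → ∀ t, q t a * q t c = 1)
    (hprimL : ∀ a, IsPrimitiveRoot (q a a) (N a)) (hNall : ∀ a, 2 ≤ N a)
    (hij : i < j) (b : Fin n → ℤ) :
    Y q N lam i (vec q N lam j b)
      = q i j • Y q N lam j (vec q N lam i b) + lam i j • Finsupp.single b 1 := by
  have hE1 : Finsupp.single (b + e j + e i) (Ac q N lam j b * Ac q N lam i (b + e j))
      = Finsupp.single (b + e i + e j) (q i j * (Ac q N lam i b * Ac q N lam j (b + e i))) := by
    rw [scalarE1 h0 hsym hij b, add_right_comm]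
  have hE2 : (∑ l ∈ Finset.univ.filter (· < i),
        Finsupp.single (b + e j - e l) (Ac q N lam j b * Bc q lam i l (b + e j)))
      = ∑ l ∈ Finset.univ.filter (· < i),
        Finsupp.single (b - e l + e j) (q i j * (Bc q lam i l b * Ac q N lam j (b - e l))) := by
    refine Finset.sum_congr rfl fun l hl => ?_
    have hli : l < i := by simpa using hl
    rw [scalarE2 h0 hsym hcon hli hij b, sub_add_eq_add_sub]
  have hE3 : (∑ m ∈ Finset.univ.filter (· < j),
        Finsupp.single (b - e m + e i) (Bc q lam j m b * Ac q N lam i (b - e m)))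
      = (∑ m ∈ Finset.univ.filter (· < j),
        Finsupp.single (b + e i - e m) (q i j * (Ac q N lam i b * Bc q lam j m (b + e i))))
        + Finsupp.single b (lam i j) := by
    have key : ∀ m ∈ Finset.univ.filter (· < j),
        Finsupp.single (b - e m + e i) (Bc q lam j m b * Ac q N lam i (b - e m))
        = Finsupp.single (b + e i - e m) (q i j * (Ac q N lam i b * Bc q lam j m (b + e i)))
          + (if m = i then Finsupp.single b (lam i j) else 0) := by
      intro m hm
      have hmj : m < j := by simpa using hm
      rcases lt_trichotomy m i with hmi | rfl | him
      · rw [scalarE3a h0 hcon hmi hij b, if_neg (ne_of_lt hmi), add_zero, sub_add_eq_add_sub]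
      · rw [if_pos rfl, sub_add_cancel, add_sub_cancel_right, ← Finsupp.single_add,
          scalarStar h0 hsym hcon (hprimL m) (hNall m) hij b]
      · rw [scalarE3b h0 hsym him hmj b, if_neg (ne_of_gt him), add_zero, sub_add_eq_add_sub]
    rw [Finset.sum_congr rfl key, Finset.sum_add_distrib, Finset.sum_ite_eq',
      if_pos (by simpa using hij)]
  have hE4 : (∑ m ∈ Finset.univ.filter (· < j), ∑ l ∈ Finset.univ.filter (· < i),
        Finsupp.single (b - e m - e l) (Bc q lam j m b * Bc q lam i l (b - e m)))
      = ∑ l ∈ Finset.univ.filter (· < i), ∑ m ∈ Finset.univ.filter (· < j),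
        Finsupp.single (b - e l - e m) (q i j * (Bc q lam i l b * Bc q lam j m (b - e l))) := by
    rw [Finset.sum_comm]
    refine Finset.sum_congr rfl fun l hl => Finset.sum_congr rfl fun m hm => ?_
    have hli : l < i := by simpa using hl
    have hmj : m < j := by simpa using hm
    rw [scalarE4 h0 hsym hcon hprimL hNall hli hmj hij b, sub_right_comm]
  rw [Y_vec, Y_vec, hE1, hE2, hE3, hE4]
  simp only [smul_add, Finset.smul_sum, Finsupp.smul_single, smul_eq_mul, mul_one]
  abel
end comm

section nilp1
variable {q : Fin n → Fin n → k} {N : Fin n → ℕ} {lam : Fin n → Fin n → k}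
variable {i l0 : Fin n}

lemma apply_smul_self (b : Fin n → ℤ) (t : ℤ) (i : Fin n) : (b + t • e i) i = b i + t := by
  simp [e]

lemma vec_pureR (hlow : ∀ l, l < i → lam l i = 0) (b : Fin n → ℤ) :
    vec q N lam i b = Finsupp.single (b + e i) (Ac q N lam i b) := by
  unfold vec
  rw [Finset.sum_eq_zero, add_zero]
  intro l hl
  simp [Bc, hlow l (by simpa using hl)]

lemma powR (hlow : ∀ l, l < i → lam l i = 0) (p : ℕ) (b : Fin n → ℤ) :
    ((Y q N lam i) ^ p) (Finsupp.single b 1)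
      = (∏ t ∈ Finset.range p, Ac q N lam i (b + (t:ℤ) • e i)) •
          Finsupp.single (b + (p:ℤ) • e i) 1 := by
  induction p with
  | zero => simp
  | succ p ih =>
    rw [pow_succ', Module.End.mul_apply, ih, map_smul, Y_single, vec_pureR hlow, one_smul,
      Finsupp.smul_single, Finset.prod_range_succ, smul_eq_mul]
    rw [Finsupp.smul_single, smul_eq_mul, mul_one]
    congr 1
    push_cast
    rw [add_smul, one_smul]
    abel

lemma prodA_zero (hNi : 2 ≤ N i) (b : Fin n → ℤ) :
    (∏ t ∈ Finset.range (N i), Ac q N lam i (b + (t:ℤ) • e i)) = 0 := by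
  by_cases hup : ∃ j, i < j ∧ lam i j ≠ 0
  · set t0 : ℕ := ((-(b i) - 1) % (N i : ℤ)).toNat with ht0
    have hNpos : (0:ℤ) < (N i : ℤ) := by exact_mod_cast (by omega : 0 < N i)
    have hmem : t0 ∈ Finset.range (N i) := by
      rw [Finset.mem_range]
      have h1 : (-(b i) - 1) % (N i : ℤ) < (N i : ℤ) := Int.emod_lt_of_pos _ hNpos
      have h2 : 0 ≤ (-(b i) - 1) % (N i : ℤ) := Int.emod_nonneg _ (by omega)
      omega
    refine Finset.prod_eq_zero hmem ?_
    unfold Ac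
    rw [apply_smul_self, ind_eq_of_up hup]
    have hdvd : (N i : ℤ) ∣ b i + (t0 : ℤ) + 1 := by
      have h2 : 0 ≤ (-(b i) - 1) % (N i : ℤ) := Int.emod_nonneg _ (by omega)
      have : ((t0 : ℤ)) = (-(b i) - 1) % (N i : ℤ) := Int.toNat_of_nonneg h2
      rw [this, Int.emod_def]
      exact ⟨-((-(b i) - 1) / (N i : ℤ)), by ring⟩
    rw [if_pos hdvd, zero_mul]
  · refine Finset.prod_eq_zero (Finset.mem_range.mpr (by omega : 0 < N i)) ?_
    unfold Ac ind
    rw [if_neg (fun hcontra => hup hcontra.1), zero_mul]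

lemma vec_pureL (hup : ¬ ∃ j, i < j ∧ lam i j ≠ 0) (hl0 : l0 < i)
    (huniq : ∀ l, l < i → l ≠ l0 → lam l i = 0) (b : Fin n → ℤ) :
    vec q N lam i b = Finsupp.single (b - e l0) (Bc q lam i l0 b) := by
  unfold vec
  rw [show Ac q N lam i b = 0 by
    unfold Ac ind; rw [if_neg (fun hcontra => hup hcontra.1), zero_mul]]
  rw [Finsupp.single_zero, zero_add]
  rw [Finset.sum_eq_single l0]
  · intro l hl hne
    simp [Bc, huniq l (by simpa using hl) hne]
  · intro h
    exact absurd (by simpa using hl0) h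

lemma powL (hup : ¬ ∃ j, i < j ∧ lam i j ≠ 0) (hl0 : l0 < i)
    (huniq : ∀ l, l < i → l ≠ l0 → lam l i = 0) (p : ℕ) (b : Fin n → ℤ) :
    ((Y q N lam i) ^ p) (Finsupp.single b 1)
      = (∏ t ∈ Finset.range p, Bc q lam i l0 (b - (t:ℤ) • e l0)) •
          Finsupp.single (b - (p:ℤ) • e l0) 1 := by
  induction p with
  | zero => simp
  | succ p ih =>
    rw [pow_succ', Module.End.mul_apply, ih, map_smul, Y_single,
      vec_pureL hup hl0 huniq, one_smul, Finsupp.smul_single, Finset.prod_range_succ,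
      smul_eq_mul]
    rw [Finsupp.smul_single, smul_eq_mul, mul_one]
    congr 1
    push_cast
    rw [add_smul, one_smul]
    abel

lemma prodB_zero (hprim0 : IsPrimitiveRoot (q l0 l0) (N l0)) (hNl : 2 ≤ N l0) (b : Fin n → ℤ) :
    (∏ t ∈ Finset.range (N l0), Bc q lam i l0 (b - (t:ℤ) • e l0)) = 0 := by
  set t0 : ℕ := ((b l0) % (N l0 : ℤ)).toNat with ht0
  have hNpos : (0:ℤ) < (N l0 : ℤ) := by exact_mod_cast (by omega : 0 < N l0)
  have h2 : 0 ≤ (b l0) % (N l0 : ℤ) := Int.emod_nonneg _ (by omega)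
  have hmem : t0 ∈ Finset.range (N l0) := by
    rw [Finset.mem_range]
    have h1 : (b l0) % (N l0 : ℤ) < (N l0 : ℤ) := Int.emod_lt_of_pos _ hNpos
    omega
  refine Finset.prod_eq_zero hmem ?_
  unfold Bc
  have haddr : (b - (t0:ℤ) • e l0) l0 = b l0 - (t0:ℤ) := by simp [e]
  rw [haddr]
  have hdvd : (N l0 : ℤ) ∣ b l0 - (t0:ℤ) := by
    have h3 : ((t0 : ℤ)) = (b l0) % (N l0 : ℤ) := Int.toNat_of_nonneg h2
    rw [h3, Int.emod_def]
    exact ⟨b l0 / (N l0 : ℤ), by ring⟩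
  rw [S_zero_of_dvd hprim0 hdvd]
  ring
end nilp1

section nilp2
variable {q : Fin n → Fin n → k} {N : Fin n → ℕ} {lam : Fin n → Fin n → k}
variable {i j l m l0 l1 : Fin n}

lemma AA_zero (hN2 : N i = 2) (b : Fin n → ℤ) :
    Ac q N lam i b * Ac q N lam i (b + e i) = 0 := by
  rw [Ac_add_self]
  unfold Ac
  by_cases hup : ∃ j, i < j ∧ lam i j ≠ 0
  · have h2 : ((N i : ℕ) : ℤ) = 2 := by rw [hN2]; norm_num
    rw [ind_eq_of_up hup, ind_eq_of_up hup, h2]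
    by_cases hd : (2:ℤ) ∣ b i + 1
    · rw [if_pos hd]; ring
    · rw [if_neg hd, if_pos (by omega : (2:ℤ) ∣ b i + 1 + 1)]; ring
  · unfold ind; rw [if_neg (fun hc => hup hc.1)]; ring

lemma cross_zero (h0 : ∀ a b, q a b ≠ 0) (hsym : ∀ a b, a ≠ b → q a b * q b a = 1)
    (hcon : ∀ a c, a < c → lam a c ≠ 0 → ∀ t, q t a * q t c = 1)
    (hprim_i : IsPrimitiveRoot (q i i) (N i)) (hN2 : N i = 2) (hli : l < i) (b : Fin n → ℤ) :
    Ac q N lam i b * Bc q lam i l (b + e i) + Bc q lam i l b * Ac q N lam i (b - e l) = 0 := by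
  by_cases hlz : lam l i = 0
  · simp [Bc, hlz]
  have H := hcon l i hli hlz
  have hqii : q i i = -1 := by
    have h := hprim_i; rw [hN2] at h; exact h.eq_neg_one_of_two_right
  have hqil : q i l = -1 := by linear_combination (-1 : k) * H i + q i l * hqii
  rw [Bc_add_ne q lam b (ne_of_lt hli) (fun h => absurd (hli.trans h) (lt_irrefl l)),
    Ac_sub_lt q N lam b h0 hli, hqil, inv_neg_one]
  ring

lemma BB_pair (h0 : ∀ a b, q a b ≠ 0) (hsym : ∀ a b, a ≠ b → q a b * q b a = 1)
    (hcon : ∀ a c, a < c → lam a c ≠ 0 → ∀ t, q t a * q t c = 1)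
    (hprim_i : IsPrimitiveRoot (q i i) (N i)) (hN2 : N i = 2)
    (hmi : m < i) (hli : l < i) (b : Fin n → ℤ) :
    Finsupp.single (b - e m - e l) (Bc q lam i m b * Bc q lam i l (b - e m))
      + Finsupp.single (b - e l - e m) (Bc q lam i l b * Bc q lam i m (b - e l)) = 0 := by
  by_cases hlzm : lam m i = 0
  · simp [Bc, hlzm]
  by_cases hlzl : lam l i = 0
  · simp [Bc, hlzl]
  have Hm := hcon m i hmi hlzm
  have Hl := hcon l i hli hlzl
  have hqii : q i i = -1 := by
    have h := hprim_i; rw [hN2] at h; exact h.eq_neg_one_of_two_right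
  rcases lt_trichotomy l m with hlm | rfl | hml
  · have hqil : q i l = -1 := by linear_combination (-1 : k) * Hl i + q i l * hqii
    rw [Bc_sub_ne q lam b (ne_of_lt hlm) (fun h => absurd (hlm.trans h) (lt_irrefl l)),
      Bc_sub_lt' q lam b h0 hlm, hqil, inv_neg_one, sub_right_comm b (e l) (e m),
      ← Finsupp.single_add]
    rw [show Bc q lam i m b * Bc q lam i l b
        + Bc q lam i l b * (-1 * Bc q lam i m b) = 0 by ring]
    simp
  · -- l = m
    have hqil : q i l = -1 := by linear_combination (-1 : k) * Hl i + q i l * hqii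
    have hqll : q l l = -1 := by
      have c1 : q i l = q l l := mul_cancel_eq (h0 l i) (hsym i l (ne_of_gt hli)) (Hl l)
      rw [← c1]; exact hqil
    have hz : Bc q lam i l b * Bc q lam i l (b - e l) = 0 := by
      rw [Bc_sub_self]
      unfold Bc
      rw [hqll]
      linear_combination (lam l i * lam l i * str q i l b * str q i l b)
        * S_mul_S_pred (k := k) (t := b l)
    rw [hz]
    simp
  · have hqim : q i m = -1 := by linear_combination (-1 : k) * Hm i + q i m * hqii
    rw [Bc_sub_lt' q lam b h0 hml,
      Bc_sub_ne q lam b (ne_of_lt hml) (fun h => absurd (hml.trans h) (lt_irrefl m)),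
      hqim, inv_neg_one, sub_right_comm b (e l) (e m), ← Finsupp.single_add]
    rw [show Bc q lam i m b * (-1 * Bc q lam i l b)
        + Bc q lam i l b * Bc q lam i m b = 0 by ring]
    simp

lemma BBsum_zero [CharZero k] (h0 : ∀ a b, q a b ≠ 0) (hsym : ∀ a b, a ≠ b → q a b * q b a = 1)
    (hcon : ∀ a c, a < c → lam a c ≠ 0 → ∀ t, q t a * q t c = 1)
    (hprim_i : IsPrimitiveRoot (q i i) (N i)) (hN2 : N i = 2) (b : Fin n → ℤ) :
    (∑ m ∈ Finset.univ.filter (· < i), ∑ l ∈ Finset.univ.filter (· < i),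
      Finsupp.single (b - e m - e l) (Bc q lam i m b * Bc q lam i l (b - e m))) = 0 := by
  set F := Finset.univ.filter (· < i) with hF
  set SS := ∑ m ∈ F, ∑ l ∈ F,
      Finsupp.single (b - e m - e l) (Bc q lam i m b * Bc q lam i l (b - e m)) with hSS
  have hswap : SS = ∑ m ∈ F, ∑ l ∈ F,
      Finsupp.single (b - e l - e m) (Bc q lam i l b * Bc q lam i m (b - e l)) := by
    rw [hSS, Finset.sum_comm]
  have h2 : (2:k) • SS = 0 := by
    rw [two_smul]
    nth_rewrite 2 [hswap]
    rw [hSS, ← Finset.sum_add_distrib]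
    refine Finset.sum_eq_zero fun m hm => ?_
    rw [← Finset.sum_add_distrib]
    refine Finset.sum_eq_zero fun l hl => ?_
    exact BB_pair h0 hsym hcon hprim_i hN2 (by simpa [hF] using hm) (by simpa [hF] using hl) b
  rcases smul_eq_zero.mp h2 with h | h
  · exact absurd h two_ne_zero
  · exact h

lemma Y2_zero [CharZero k] (h0 : ∀ a b, q a b ≠ 0) (hsym : ∀ a b, a ≠ b → q a b * q b a = 1)
    (hcon : ∀ a c, a < c → lam a c ≠ 0 → ∀ t, q t a * q t c = 1)
    (hprim_i : IsPrimitiveRoot (q i i) (N i)) (hN2 : N i = 2) (b : Fin n → ℤ) :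
    Y q N lam i (vec q N lam i b) = 0 := by
  rw [Y_vec i i b]
  have h1 : Finsupp.single (b + e i + e i) (Ac q N lam i b * Ac q N lam i (b + e i))
      = (0 : V k n) := by rw [AA_zero hN2 b]; simp
  have h23 : (∑ l ∈ Finset.univ.filter (· < i),
        Finsupp.single (b + e i - e l) (Ac q N lam i b * Bc q lam i l (b + e i)))
      + (∑ m ∈ Finset.univ.filter (· < i),
        Finsupp.single (b - e m + e i) (Bc q lam i m b * Ac q N lam i (b - e m))) = 0 := by
    rw [← Finset.sum_add_distrib]
    refine Finset.sum_eq_zero fun l hl => ?_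
    have hli : l < i := by simpa using hl
    rw [sub_add_eq_add_sub, ← Finsupp.single_add,
      cross_zero h0 hsym hcon hprim_i hN2 hli b]
    simp
  have h4 := BBsum_zero h0 hsym hcon hprim_i hN2 b
  set T1 := Finsupp.single (b + e i + e i) (Ac q N lam i b * Ac q N lam i (b + e i))
  set T2 := ∑ l ∈ Finset.univ.filter (· < i),
        Finsupp.single (b + e i - e l) (Ac q N lam i b * Bc q lam i l (b + e i))
  set T3 := ∑ m ∈ Finset.univ.filter (· < i),
        Finsupp.single (b - e m + e i) (Bc q lam i m b * Ac q N lam i (b - e m))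
  set T4 := ∑ m ∈ Finset.univ.filter (· < i), ∑ l ∈ Finset.univ.filter (· < i),
        Finsupp.single (b - e m - e l) (Bc q lam i m b * Bc q lam i l (b - e m))
  calc T1 + T2 + (T3 + T4) = T1 + (T2 + T3) + T4 := by abel
  _ = 0 := by rw [h1, h23, h4]; simp

lemma prim_neg_one [CharZero k] : IsPrimitiveRoot (-1 : k) 2 :=
  IsPrimitiveRoot.neg_one 0 (by norm_num)

lemma Ntwo_of_sq [CharZero k] (hsq : q i i * q i i = 1)
    (hprim_i : IsPrimitiveRoot (q i i) (N i)) (hNi : 2 ≤ N i) : N i = 2 := by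
  have hne : q i i ≠ 1 := hprim_i.ne_one (by omega)
  have hm1 : q i i = -1 := eq_neg_one_of_sq hsq hne
  have h := hprim_i
  rw [hm1] at h
  exact h.unique prim_neg_one

lemma sq_one_branchA (h0 : ∀ a b, q a b ≠ 0) (hsym : ∀ a b, a ≠ b → q a b * q b a = 1)
    (hcon : ∀ a c, a < c → lam a c ≠ 0 → ∀ t, q t a * q t c = 1)
    (hl0 : l0 < i) (hlz0 : lam l0 i ≠ 0) (hij : i < j) (hlzj : lam i j ≠ 0) :
    q i i * q i i = 1 := by
  have H1 := hcon l0 i hl0 hlz0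
  have H2 := hcon i j hij hlzj
  have c1 : q i l0 = q l0 l0 := mul_cancel_eq (h0 l0 i) (hsym i l0 (ne_of_gt hl0)) (H1 l0)
  have c2 : q l0 l0 * q i i = 1 := by rw [← c1]; exact H1 i
  have c3 : q l0 i = q i i :=
    mul_cancel_eq (h0 l0 l0) (by linear_combination H1 l0) (by linear_combination c2)
  have c5 : q j i = q i i := mul_cancel_eq (h0 i j) (hsym j i (ne_of_gt hij)) (H2 i)
  have c6 : q l0 i * q j i = 1 := by
    linear_combination (q j l0 * q j i) * H2 l0 + H1 j
      + (-(q l0 i * q j i)) * hsym l0 j (ne_of_lt (hl0.trans hij))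
  linear_combination (-(q j i)) * c3 + (-(q i i)) * c5 + c6

lemma sq_one_branchB (h0 : ∀ a b, q a b ≠ 0) (hsym : ∀ a b, a ≠ b → q a b * q b a = 1)
    (hcon : ∀ a c, a < c → lam a c ≠ 0 → ∀ t, q t a * q t c = 1)
    (hl0 : l0 < i) (hlz0 : lam l0 i ≠ 0) (hl1 : l1 < i) (hlz1 : lam l1 i ≠ 0)
    (hne : l0 ≠ l1) : q i i * q i i = 1 := by
  have H1 := hcon l0 i hl0 hlz0
  have H1' := hcon l1 i hl1 hlz1
  have c1 : q i l0 = q l0 l0 := mul_cancel_eq (h0 l0 i) (hsym i l0 (ne_of_gt hl0)) (H1 l0)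
  have c2 : q l0 l0 * q i i = 1 := by rw [← c1]; exact H1 i
  have c3 : q l0 i = q i i :=
    mul_cancel_eq (h0 l0 l0) (by linear_combination H1 l0) (by linear_combination c2)
  have c1' : q i l1 = q l1 l1 := mul_cancel_eq (h0 l1 i) (hsym i l1 (ne_of_gt hl1)) (H1' l1)
  have c2' : q l1 l1 * q i i = 1 := by rw [← c1']; exact H1' i
  have c3' : q l1 i = q i i :=
    mul_cancel_eq (h0 l1 l1) (by linear_combination H1' l1) (by linear_combination c2')
  have c6 : q l0 i * q l1 i = 1 := by
    linear_combination (q l1 l0 * q l1 i) * H1' l0 + H1 l1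
      + (-(q l0 i * q l1 i)) * hsym l0 l1 hne
  linear_combination (-(q l1 i)) * c3 + (-(q i i)) * c3' + c6

lemma N_eq_of_partner (h0 : ∀ a b, q a b ≠ 0) (hsym : ∀ a b, a ≠ b → q a b * q b a = 1)
    (hprimL : ∀ a, IsPrimitiveRoot (q a a) (N a))
    (hl0 : l0 < i) (H : ∀ t, q t l0 * q t i = 1) : N i = N l0 := by
  have c1 : q i l0 = q l0 l0 := mul_cancel_eq (h0 l0 i) (hsym i l0 (ne_of_gt hl0)) (H l0)
  have c2 : q l0 l0 * q i i = 1 := by rw [← c1]; exact H i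
  have hinv : (q l0 l0)⁻¹ = q i i := inv_eq_of_mul_eq_one_right c2
  have h := (hprimL l0).inv
  rw [hinv] at h
  exact (hprimL i).unique h

theorem Ynilp [CharZero k] (h0 : ∀ a b, q a b ≠ 0) (hsym : ∀ a b, a ≠ b → q a b * q b a = 1)
    (hcon : ∀ a c, a < c → lam a c ≠ 0 → ∀ t, q t a * q t c = 1)
    (hprimL : ∀ a, IsPrimitiveRoot (q a a) (N a)) (hNall : ∀ a, 2 ≤ N a) (i : Fin n) :
    (Y q N lam i) ^ (N i) = 0 := by
  refine Finsupp.lhom_ext fun b c => ?_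
  rw [LinearMap.zero_apply]
  rw [show (Finsupp.single b c : V k n) = c • Finsupp.single b 1 by
    rw [Finsupp.smul_single, smul_eq_mul, mul_one]]
  rw [map_smul]
  suffices h : ((Y q N lam i) ^ (N i)) (Finsupp.single b (1:k)) = 0 by rw [h, smul_zero]
  by_cases hlow : ∀ l, l < i → lam l i = 0
  · rw [powR hlow, prodA_zero (hNall i), zero_smul]
  · push_neg at hlow
    obtain ⟨l0, hl0, hlz0⟩ := hlow
    by_cases hN2 : N i = 2
    · rw [hN2, pow_two, Module.End.mul_apply, Y_single, one_smul,
        Y2_zero h0 hsym hcon (hprimL i) hN2 b]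
    · have hup : ¬ ∃ j, i < j ∧ lam i j ≠ 0 := by
        rintro ⟨j, hij, hlzj⟩
        exact hN2 (Ntwo_of_sq (sq_one_branchA h0 hsym hcon hl0 hlz0 hij hlzj)
          (hprimL i) (hNall i))
      have huniq : ∀ l, l < i → l ≠ l0 → lam l i = 0 := by
        intro l hl hne
        by_contra hlz
        exact hN2 (Ntwo_of_sq (sq_one_branchB h0 hsym hcon hl hlz hl0 hlz0 hne)
          (hprimL i) (hNall i))
      have hNeq : N i = N l0 :=
        N_eq_of_partner h0 hsym hprimL hl0 (hcon l0 i hl0 hlz0)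
      rw [powL hup hl0 huniq, hNeq, prodB_zero (hprimL l0) (by rw [← hNeq]; exact hNall i) b,
        zero_smul]
end nilp2

section opcomm
variable {q : Fin n → Fin n → k} {N : Fin n → ℕ} {lam : Fin n → Fin n → k}
variable {i j : Fin n}

lemma comm_op (h0 : ∀ a b, q a b ≠ 0) (hsym : ∀ a b, a ≠ b → q a b * q b a = 1)
    (hcon : ∀ a c, a < c → lam a c ≠ 0 → ∀ t, q t a * q t c = 1)
    (hprimL : ∀ a, IsPrimitiveRoot (q a a) (N a)) (hNall : ∀ a, 2 ≤ N a)
    (hij : i < j) :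
    (Y q N lam i) * (Y q N lam j)
      = q i j • ((Y q N lam j) * (Y q N lam i))
        + lam i j • (1 : Module.End k (V k n)) := by
  refine Finsupp.lhom_ext fun b c => ?_
  rw [Module.End.mul_apply, Y_single, map_smul,
    comm_aux h0 hsym hcon hprimL hNall hij b]
  rw [LinearMap.add_apply, LinearMap.smul_apply, LinearMap.smul_apply,
    Module.End.mul_apply, Y_single, map_smul, Module.End.one_apply]
  rw [smul_add]
  rw [smul_comm c (q i j), smul_comm c (lam i j)]
  congr 1
  rw [Finsupp.smul_single, Finsupp.smul_single, smul_eq_mul, smul_eq_mul, mul_one,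
    Finsupp.smul_single, smul_eq_mul]
end opcomm

end QCliff


theorem statement_0 {k : Type*} [Field k] [IsAlgClosed k] [CharZero k]
    {n : ℕ} (hn : 1 ≤ n)
    (q : Fin n → Fin n → k) (hq0 : ∀ i j, q i j ≠ 0)
    (hqsym : ∀ i j, i ≠ j → q i j * q j i = 1)
    (N : Fin n → ℕ) (hN : ∀ i, 2 ≤ N i)
    (hprim : ∀ i, IsPrimitiveRoot (q i i) (N i))
    (lam : Fin n → Fin n → k)
    (hlam : ∀ i j, i < j → ¬ (∀ l, q l i * q l j = 1) → lam i j = 0) :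
    (1 : FreeAlgebra k (Fin n)) ∉ TwoSidedIdeal.span
      {x : FreeAlgebra k (Fin n) |
        (∃ i j, i < j ∧
          x = FreeAlgebra.ι k i * FreeAlgebra.ι k j
              - q i j • (FreeAlgebra.ι k j * FreeAlgebra.ι k i)
              - lam i j • (1 : FreeAlgebra k (Fin n))) ∨
        (∃ i, x = FreeAlgebra.ι k i ^ N i)} := by
  intro hmem
  have hcon : ∀ a c, a < c → lam a c ≠ 0 → ∀ t, q t a * q t c = 1 := by
    intro a c hac hlz t
    by_contra h
    exact hlz (hlam a c hac (fun hall => h (hall t)))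
  let φ : FreeAlgebra k (Fin n) →ₐ[k] Module.End k (QCliff.V k n) :=
    FreeAlgebra.lift k (fun i => QCliff.Y q N lam i)
  have hkill : ∀ x ∈ {x : FreeAlgebra k (Fin n) |
        (∃ i j, i < j ∧
          x = FreeAlgebra.ι k i * FreeAlgebra.ι k j
              - q i j • (FreeAlgebra.ι k j * FreeAlgebra.ι k i)
              - lam i j • (1 : FreeAlgebra k (Fin n))) ∨
        (∃ i, x = FreeAlgebra.ι k i ^ N i)}, φ x = 0 := by
    rintro x (⟨i, j, hij, rfl⟩ | ⟨i, rfl⟩)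
    · rw [map_sub, map_sub, map_mul, map_smul, map_smul, map_mul, map_one,
        FreeAlgebra.lift_ι_apply, FreeAlgebra.lift_ι_apply]
      rw [QCliff.comm_op hq0 hqsym hcon hprim hN hij]
      abel
    · rw [map_pow, FreeAlgebra.lift_ι_apply,
        QCliff.Ynilp hq0 hqsym hcon hprim hN i]
  have h1 : (1 : FreeAlgebra k (Fin n)) ∈ TwoSidedIdeal.ker φ :=
    TwoSidedIdeal.mem_span_iff.mp hmem _
      (fun x hx => (TwoSidedIdeal.mem_ker φ).mpr (hkill x hx))
  have h2 : (1 : Module.End k (QCliff.V k n)) = 0 := by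
    have := (TwoSidedIdeal.mem_ker φ).mp h1
    rwa [map_one] at this
  have h3 := congrArg (fun f : Module.End k (QCliff.V k n) =>
    f (Finsupp.single (0 : Fin n → ℤ) (1:k))) h2
  simp only [Module.End.one_apply, LinearMap.zero_apply] at h3
  exact one_ne_zero (Finsupp.single_eq_zero.mp h3)
end

section
/- Let k be a field, Γ an abelian group, n ≥ 1, g_1,…,g_n ∈ Γ, and χ_1,…,χ_n : Γ → kˣ group homomorphisms; set q_{ij} := χ_j(g_i) and assume q_{ii} ≠ 1 for every i ∈ {1,…,n}. Call indices a,b adjacent if a ≠ b and q_{ab}·q_{ba} ≠ 1, and let ∼ be the smallest equivalence relation on {1,…,n} containing the adjacency relation. Suppose i ≠ j are indices with g_i = g_j, χ_i = χ_j, and i ≁ j. Then no index k is adjacent to i, no index k is adjacent to j, and q_{ii} = q_{ij} = q_{ji} = q_{jj} = −1. -/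
theorem statement_1 {k : Type*} [Field k] {Γ : Type*} [CommGroup Γ]
    {n : ℕ} (hn : 1 ≤ n)
    (g : Fin n → Γ) (χ : Fin n → Γ →* kˣ)
    (hdiag : ∀ i, χ i (g i) ≠ 1)
    (i j : Fin n) (hij : i ≠ j) (hg : g i = g j) (hχ : χ i = χ j)
    (hsep : ¬ Relation.EqvGen
      (fun a b => a ≠ b ∧ χ b (g a) * χ a (g b) ≠ 1) i j) :
    (∀ l, ¬ (l ≠ i ∧ χ i (g l) * χ l (g i) ≠ 1)) ∧
    (∀ l, ¬ (l ≠ j ∧ χ j (g l) * χ l (g j) ≠ 1)) ∧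
    χ i (g i) = -1 ∧ χ j (g i) = -1 ∧ χ i (g j) = -1 ∧ χ j (g j) = -1 := by
  have hji : χ j (g i) = χ i (g i) := by rw [hχ]
  have hij' : χ i (g j) = χ i (g i) := by rw [hg]
  have hjj : χ j (g j) = χ i (g i) := by rw [hχ, hg]
  have hq2 : χ j (g i) * χ i (g j) = 1 := by
    by_contra h
    exact hsep (Relation.EqvGen.rel i j ⟨hij, h⟩)
  rw [hji, hij'] at hq2
  have hneg : χ i (g i) = -1 := by
    have hk := congrArg (Units.val) hq2
    simp only [Units.val_mul, Units.val_one] at hk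
    rcases (mul_self_eq_one_iff).1 hk with h1 | h1
    · exact absurd (Units.ext h1) (hdiag i)
    · exact Units.ext (by simpa using h1)
  have part1 : ∀ l, ¬ (l ≠ i ∧ χ i (g l) * χ l (g i) ≠ 1) := by
    rintro l ⟨hli, hadj⟩
    by_cases hlj : l = j
    · subst hlj
      apply hadj
      rw [hij', mul_comm, hji, hq2]
    · apply hsep
      have r1 : Relation.EqvGen (fun a b => a ≠ b ∧ χ b (g a) * χ a (g b) ≠ 1) i l :=
        Relation.EqvGen.rel i l ⟨Ne.symm hli, by rwa [mul_comm] at hadj⟩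
      have r2 : Relation.EqvGen (fun a b => a ≠ b ∧ χ b (g a) * χ a (g b) ≠ 1) l j :=
        Relation.EqvGen.rel l j ⟨hlj, by rw [← hχ, ← hg]; exact hadj⟩
      exact r1.trans _ _ _ r2
  refine ⟨part1, ?_, hneg, hji.trans hneg, hij'.trans hneg, hjj.trans hneg⟩
  rintro l ⟨hlj, hadj⟩
  by_cases hli : l = i
  · subst hli
    apply hadj
    rw [hji, hij']
    exact hq2
  · exact part1 l ⟨hli, by rw [hχ, hg]; exact hadj⟩
end

section
/- Let k be an algebraically closed field of characteristic 0 and q ∈ k a primitive 4th root of unity (so q² = −1). Let the 2×2 braiding matrix be q_{11} = q, q_{12} = −1, q_{21} = q, q_{22} = −1 (super type A₂). Then for every λ, μ ∈ k, the quotient of the free algebra k⟨y_1,y_2⟩ by the two-sided ideal generated by y_{112} − λ and y_2² − μ is a nontrivial algebra. -/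
/-- The `q`-bilinear form `q(α,β) = ∏ i j, (q i j) ^ (α i * β j)` on `ℕⁿ`-degrees. -/
noncomputable def qForm {k : Type*} [Field k] {n : ℕ} (q : Fin n → Fin n → k)
    (α β : Fin n → ℕ) : k :=
  ∏ i : Fin n, ∏ j : Fin n, q i j ^ (α i * β j)

/-- The braided commutator on pairs (homogeneous element, its `ℕⁿ`-degree):
`[u,v]_c = u v − q(deg u, deg v) v u`. -/
noncomputable def bc {k : Type*} [Field k] {n : ℕ} (q : Fin n → Fin n → k)
    (u v : FreeAlgebra k (Fin n) × (Fin n → ℕ)) :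
    FreeAlgebra k (Fin n) × (Fin n → ℕ) :=
  (u.1 * v.1 - qForm q u.2 v.2 • (v.1 * u.1), fun i => u.2 i + v.2 i)

/-- The generator `y i` of the free algebra, together with its degree `e_i`. -/
noncomputable def ygen (k : Type*) [Field k] {n : ℕ} (i : Fin n) :
    FreeAlgebra k (Fin n) × (Fin n → ℕ) :=
  (FreeAlgebra.ι k i, fun j => if j = i then 1 else 0)

/-!
The quotient is nonzero because it has a nonzero representation on `k⁴`. Let `y₁` act by
`diag(1, -1, q, -q)`; multiplying by a diagonal matrix scales rows or columns, so the image of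
`y₁₁₂` is the matrix of `y₂` with its `(i, j)` entry scaled by a product of two linear forms in
the diagonal entries, which vanishes on a sparse pattern off the diagonal. Filling that pattern
gives a matrix for `y₂` such that `y₁₁₂` maps to `2 (1 + q) b` and `y₂²` to `b² + m`, for free
parameters `b, m`. Since `q² = -1 ≠ 1`, the factor `2 (1 + q)` is invertible, so every `λ` and
`μ` are reached.
-/

open Matrix FreeAlgebra

theorem TwoSidedIdeal.one_notMem_span_of_map_eq_zero {R S F : Type*} [Ring R] [Ring S]
    [Nontrivial S] [FunLike F R S] [RingHomClass F R S] (f : F) {s : Set R}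
    (hs : ∀ x ∈ s, f x = 0) : (1 : R) ∉ span s := fun h ↦ by
  have h1 : (1 : R) ∈ ker f := span_le.2 (fun x hx ↦ (mem_ker f).2 (hs x hx)) h
  simp [mem_ker] at h1

theorem IsPrimitiveRoot.sq_eq_neg_one {R : Type*} [CommRing R] [NoZeroDivisors R] {ζ : R}
    (h : IsPrimitiveRoot ζ 4) : ζ ^ 2 = -1 :=
  (h.pow_of_dvd two_ne_zero (by norm_num)).eq_neg_one_of_two_right

theorem IsPrimitiveRoot.two_mul_one_add_ne_zero {R : Type*} [CommRing R] [IsDomain R] {ζ : R}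
    (h : IsPrimitiveRoot ζ 4) : 2 * (1 + ζ) ≠ 0 := by
  have h_one_add : 1 + ζ ≠ 0 := fun h0 ↦ h.pow_ne_one_of_pos_of_lt two_ne_zero (by norm_num)
    (by rw [eq_neg_of_add_eq_zero_right h0]; norm_num)
  -- `(1 + ζ) ^ 2 = 2 ζ` absorbs the factor `2`, whatever the characteristic
  have h_two : 2 * (1 + ζ) = -ζ * (1 + ζ) ^ 3 := by
    linear_combination (ζ ^ 2 + 3 * ζ + 2) * h.sq_eq_neg_one
  rw [h_two]
  exact mul_ne_zero (neg_ne_zero.2 (h.ne_zero (by norm_num))) (pow_ne_zero 3 h_one_add)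

theorem fst_bc_ygen_bc_ygen_ygen {k : Type*} [Field k] (q : Fin 2 → Fin 2 → k) :
    (bc q (ygen k 0) (bc q (ygen k 0) (ygen k 1))).1 =
      ι k 0 * (ι k 0 * ι k 1 - q 0 1 • (ι k 1 * ι k 0)) -
        (q 0 0 * q 0 1) • ((ι k 0 * ι k 1 - q 0 1 • (ι k 1 * ι k 0)) * ι k 0) := by
  simp [bc, ygen, qForm, Fin.prod_univ_two]

theorem Matrix.diagonal_iterated_anticommutator {n R : Type*} [Fintype n] [DecidableEq n]
    [CommRing R] (d : n → R) (B : Matrix n n R) (c : R) :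
    diagonal d * (diagonal d * B + B * diagonal d) +
        c • ((diagonal d * B + B * diagonal d) * diagonal d) =
      of fun i j ↦ (d i + d j) * (d i + c * d j) * B i j := by
  ext i j
  simp only [mul_add, add_mul, diagonal_mul, mul_diagonal, add_apply, smul_apply, of_apply,
    smul_eq_mul]
  ring

namespace SuperA2

variable {k : Type*} [Field k]

def y₁Mat (q : k) : Matrix (Fin 4) (Fin 4) k := diagonal ![1, -1, q, -q]

/-- With `d = (1, -1, q, -q)`, the factor `(dᵢ + dⱼ) (dᵢ + q dⱼ)` of
`Matrix.diagonal_iterated_anticommutator` vanishes exactly on the off-diagonal support below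
and equals `2 (1 + q) dᵢ²` on the diagonal, where `b dᵢ²` sits (`dᵢ⁴ = 1`); the entries involving
`m` then make the square scalar. -/
def y₂Mat (b m : k) : Matrix (Fin 4) (Fin 4) k :=
  !![b, 1, 1, 0; m, b, 0, -1; 0, -2*b, -b, 1; 2*b*m, 0, m, -b]

theorem y₂Mat_sq (b m : k) : y₂Mat b m ^ 2 = (b ^ 2 + m) • 1 := by
  ext i j
  fin_cases i <;> fin_cases j <;> simp [y₂Mat, sq, mul_apply, Fin.sum_univ_four, one_apply] <;> ring

theorem y₁Mat_iterated_anticommutator_y₂Mat {q : k} (hq : q ^ 2 = -1) (b m : k) :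
    y₁Mat q * (y₁Mat q * y₂Mat b m + y₂Mat b m * y₁Mat q) +
        q • ((y₁Mat q * y₂Mat b m + y₂Mat b m * y₁Mat q) * y₁Mat q) =
      (2 * (1 + q) * b) • 1 := by
  rw [y₁Mat, diagonal_iterated_anticommutator]
  ext i j
  fin_cases i <;> fin_cases j <;> simp [y₂Mat, one_apply] <;> grind

end SuperA2

open SuperA2 in
theorem statement_6_general {k : Type*} [Field k]
    (q₀ : k) (hq₀ : IsPrimitiveRoot q₀ 4)
    (lam μ : k)
    (q : Fin 2 → Fin 2 → k) (hq : q = ![![q₀, -1], ![q₀, -1]]) :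
    (1 : FreeAlgebra k (Fin 2)) ∉ TwoSidedIdeal.span
      ({(bc q (ygen k 0) (bc q (ygen k 0) (ygen k 1))).1 - algebraMap k (FreeAlgebra k (Fin 2)) lam,
        FreeAlgebra.ι k (1 : Fin 2) ^ 2 - algebraMap k (FreeAlgebra k (Fin 2)) μ} : Set (FreeAlgebra k (Fin 2))) := by
  subst hq
  obtain ⟨b, rfl⟩ : ∃ b, lam = 2 * (1 + q₀) * b :=
    ⟨lam / (2 * (1 + q₀)), (mul_div_cancel₀ _ hq₀.two_mul_one_add_ne_zero).symm⟩
  obtain ⟨m, rfl⟩ : ∃ m, μ = b ^ 2 + m := ⟨μ - b ^ 2, by ring⟩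
  apply TwoSidedIdeal.one_notMem_span_of_map_eq_zero (lift k ![y₁Mat q₀, y₂Mat b m])
  rintro x (rfl | rfl)
  · rw [fst_bc_ygen_bc_ygen_ygen, Algebra.algebraMap_eq_smul_one]
    simp only [cons_val_zero, cons_val_one, neg_smul, one_smul, sub_neg_eq_add, mul_neg, mul_one,
      map_sub, map_add, map_mul, map_smul, map_one, lift_ι_apply]
    rw [y₁Mat_iterated_anticommutator_y₂Mat hq₀.sq_eq_neg_one, sub_self]
  · simp [Algebra.algebraMap_eq_smul_one, y₂Mat_sq]

theorem statement_6 {k : Type*} [Field k] [IsAlgClosed k] [CharZero k]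
    (q₀ : k) (hq₀ : IsPrimitiveRoot q₀ 4)
    (lam μ : k)
    (q : Fin 2 → Fin 2 → k) (hq : q = ![![q₀, -1], ![q₀, -1]]) :
    (1 : FreeAlgebra k (Fin 2)) ∉ TwoSidedIdeal.span
      ({(bc q (ygen k 0) (bc q (ygen k 0) (ygen k 1))).1 - algebraMap k (FreeAlgebra k (Fin 2)) lam,
        FreeAlgebra.ι k (1 : Fin 2) ^ 2 - algebraMap k (FreeAlgebra k (Fin 2)) μ} : Set (FreeAlgebra k (Fin 2))) :=
  statement_6_general q₀ hq₀ lam μ q hq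
end

section
/- Let k be an algebraically closed field of characteristic 0 and q ∈ k a primitive 6th root of unity. Let the 2×2 braiding matrix be q_{11} = −1, q_{12} = q, q_{21} = −1, q_{22} = q. Then for every μ, λ ∈ k, the quotient of the free algebra k⟨y_1,y_2⟩ by the two-sided ideal generated by y_1² − μ and y_{2221} − λ is a nontrivial algebra. -/
theorem statement_7 {k : Type*} [Field k] [IsAlgClosed k] [CharZero k]
    (q₀ : k) (hq₀ : IsPrimitiveRoot q₀ 6)
    (μ lam : k)
    (q : Fin 2 → Fin 2 → k) (hq : q = ![![-1, q₀], ![-1, q₀]]) :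
    (1 : FreeAlgebra k (Fin 2)) ∉ TwoSidedIdeal.span
      ({FreeAlgebra.ι k (0 : Fin 2) ^ 2 - algebraMap k (FreeAlgebra k (Fin 2)) μ,
        (bc q (ygen k 1) (bc q (ygen k 1) (bc q (ygen k 1) (ygen k 0)))).1 - algebraMap k (FreeAlgebra k (Fin 2)) lam} : Set (FreeAlgebra k (Fin 2))) := by
  -- facts about q₀
  have h6 : q₀ ^ 6 = 1 := hq₀.pow_eq_one
  have h3 : q₀ ^ 3 = -1 := by
    have hsq : (q₀ ^ 3 - 1) * (q₀ ^ 3 + 1) = 0 := by linear_combination h6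
    rcases mul_eq_zero.mp hsq with h | h
    · exact absurd (by linear_combination h)
        (hq₀.pow_ne_one_of_pos_of_lt (l := 3) (by norm_num) (by norm_num))
    · linear_combination h
  have hne : q₀ ≠ -1 := fun h =>
    hq₀.pow_ne_one_of_pos_of_lt (l := 2) (by norm_num) (by norm_num) (by rw [h]; ring)
  have h2 : q₀ ^ 2 - q₀ + 1 = 0 := by
    have h' : (q₀ + 1) * (q₀ ^ 2 - q₀ + 1) = 0 := by linear_combination h3
    rcases mul_eq_zero.mp h' with h | h
    · exact absurd (by linear_combination h) hne
    · exact h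
  have hc2 : (2 * q₀ - 1) ≠ 0 := fun h =>
    three_ne_zero (α := k) (by linear_combination (4:k) * h2 - (2*q₀ - 1) * h)
  obtain ⟨c, hclam⟩ : ∃ c : k, c * (2 * q₀ - 1) = lam :=
    ⟨lam / (2 * q₀ - 1), div_mul_cancel₀ _ hc2⟩
  -- roots s, t of X² - cX + μ
  obtain ⟨s, t, hst, hsum⟩ : ∃ s t : k, s * t = μ ∧ s + t = c := by
    obtain ⟨s, hs⟩ := IsAlgClosed.exists_root
      (Polynomial.X ^ 2 - Polynomial.C c * Polynomial.X + Polynomial.C μ) (by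
        intro h
        have hd : (Polynomial.X ^ 2 - Polynomial.C c * Polynomial.X + Polynomial.C μ :
            Polynomial k).degree = 2 := by compute_degree!
        simp [h] at hd)
    have hs' : s ^ 2 - c * s + μ = 0 := by simpa [Polynomial.IsRoot] using hs
    exact ⟨s, c - s, by linear_combination -hs', by ring⟩
  -- the representation
  set Y₀ : Matrix (Fin 2) (Fin 2) k := !![0, s; t, 0] with hY₀
  set Y₁ : Matrix (Fin 2) (Fin 2) k := !![0, 1; 1, 0] with hY₁
  set φ : FreeAlgebra k (Fin 2) →ₐ[k] Matrix (Fin 2) (Fin 2) k :=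
    FreeAlgebra.lift k ![Y₀, Y₁] with hφ
  have hφ0 : φ (FreeAlgebra.ι k 0) = Y₀ := by simp [hφ]
  have hφ1 : φ (FreeAlgebra.ι k 1) = Y₁ := by simp [hφ]
  -- φ kills the first relation
  have hr1 : φ (FreeAlgebra.ι k (0 : Fin 2) ^ 2 - algebraMap k (FreeAlgebra k (Fin 2)) μ) = 0 := by
    rw [map_sub, map_pow, hφ0, AlgHom.commutes]
    ext i j
    fin_cases i <;> fin_cases j <;>
      simp [hY₀, pow_two, Matrix.mul_apply, Fin.sum_univ_two, Matrix.algebraMap_eq_diagonal,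
        Matrix.diagonal] <;> linear_combination hst
  -- the bc element
  have hbc : (bc q (ygen k 1) (bc q (ygen k 1) (bc q (ygen k 1) (ygen k 0)))).1 =
      FreeAlgebra.ι k 1 * (FreeAlgebra.ι k 1 * (FreeAlgebra.ι k 1 * FreeAlgebra.ι k 0 + FreeAlgebra.ι k 0 * FreeAlgebra.ι k 1)
        + q₀ • ((FreeAlgebra.ι k 1 * FreeAlgebra.ι k 0 + FreeAlgebra.ι k 0 * FreeAlgebra.ι k 1) * FreeAlgebra.ι k 1))
      + (q₀^2) • ((FreeAlgebra.ι k 1 * (FreeAlgebra.ι k 1 * FreeAlgebra.ι k 0 + FreeAlgebra.ι k 0 * FreeAlgebra.ι k 1)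
        + q₀ • ((FreeAlgebra.ι k 1 * FreeAlgebra.ι k 0 + FreeAlgebra.ι k 0 * FreeAlgebra.ι k 1) * FreeAlgebra.ι k 1)) * FreeAlgebra.ι k 1) := by
    simp only [bc, ygen, qForm, hq, Fin.prod_univ_two]
    norm_num
  -- φ kills the second relation
  have hr2 : φ ((bc q (ygen k 1) (bc q (ygen k 1) (bc q (ygen k 1) (ygen k 0)))).1
      - algebraMap k (FreeAlgebra k (Fin 2)) lam) = 0 := by
    rw [map_sub, hbc, AlgHom.commutes]
    simp only [map_add, map_mul, map_smul, hφ0, hφ1]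
    ext i j
    fin_cases i <;> fin_cases j <;>
      simp [hY₀, hY₁, Matrix.mul_apply, Fin.sum_univ_two, Matrix.algebraMap_eq_diagonal,
        Matrix.diagonal, Matrix.smul_apply, Matrix.add_apply] <;>
      linear_combination (2*q₀-1) * hsum + hclam + (s+t) * h2 + (s+t) * h3
  -- conclude
  intro hmem
  have hsub : ({FreeAlgebra.ι k (0 : Fin 2) ^ 2 - algebraMap k (FreeAlgebra k (Fin 2)) μ,
        (bc q (ygen k 1) (bc q (ygen k 1) (bc q (ygen k 1) (ygen k 0)))).1 - algebraMap k (FreeAlgebra k (Fin 2)) lam} : Set (FreeAlgebra k (Fin 2)))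
      ⊆ (TwoSidedIdeal.ker (φ : FreeAlgebra k (Fin 2) →+* Matrix (Fin 2) (Fin 2) k) : Set _) := by
    intro x hx
    rcases hx with h | h
    · subst h; exact (TwoSidedIdeal.mem_ker _).mpr hr1
    · subst h; exact (TwoSidedIdeal.mem_ker _).mpr hr2
  have h1 := TwoSidedIdeal.mem_span_iff.mp hmem _ hsub
  rw [TwoSidedIdeal.mem_ker _] at h1
  simp at h1
end

section
/- Let k be an algebraically closed field of characteristic 0 and ζ ∈ k a primitive 3rd root of unity. Let the 2×2 braiding matrix be q_{11} = ζ, q_{12} = −ζ, q_{21} = ζ, q_{22} = −ζ (modular type br(2,a)). Then for every λ ∈ k, the quotient of the free algebra k⟨y_1,y_2⟩ by the two-sided ideal generated by y_1³ and y_{221} − λ is a nontrivial algebra. -/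
theorem TwoSidedIdeal.one_notMem_span_of_forall_map_eq_zero {R S : Type*} [Ring R] [Ring S]
    [Nontrivial S] (f : R →+* S) {s : Set R} (hs : ∀ x ∈ s, f x = 0) :
    (1 : R) ∉ TwoSidedIdeal.span s := by
  intro h1
  have h1_ker : (1 : R) ∈ TwoSidedIdeal.ker f :=
    TwoSidedIdeal.span_le.2 (fun x hx => (TwoSidedIdeal.mem_ker f).2 (hs x hx)) h1
  simp [TwoSidedIdeal.mem_ker] at h1_ker

section BraidedCommutator

variable {k : Type*} [Field k] {n : ℕ} (q : Fin n → Fin n → k)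

theorem qForm_add_right (α β γ : Fin n → ℕ) :
    qForm q α (β + γ) = qForm q α β * qForm q α γ := by
  simp only [qForm, Pi.add_apply, mul_add, pow_add, Finset.prod_mul_distrib]

theorem qForm_single_single (i j : Fin n) :
    qForm q (Pi.single i 1) (Pi.single j 1) = q i j := by
  simp [qForm, Pi.single_apply, Finset.prod_ite_eq']

theorem ygen_snd (i : Fin n) : (ygen k i).2 = Pi.single i 1 := by
  ext j
  simp [ygen, Pi.single_apply]

theorem bc_fst (u v : FreeAlgebra k (Fin n) × (Fin n → ℕ)) :
    (bc q u v).1 = u.1 * v.1 - qForm q u.2 v.2 • (v.1 * u.1) := rfl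

theorem bc_snd (u v : FreeAlgebra k (Fin n) × (Fin n → ℕ)) : (bc q u v).2 = u.2 + v.2 := rfl

theorem bc_ygen_ygen_fst (i j : Fin n) :
    (bc q (ygen k i) (ygen k j)).1 =
      FreeAlgebra.ι k i * FreeAlgebra.ι k j - q i j • (FreeAlgebra.ι k j * FreeAlgebra.ι k i) := by
  rw [bc_fst, ygen_snd, ygen_snd, qForm_single_single]
  rfl

theorem bc_ygen_bc_ygen_ygen_fst (i j : Fin n) :
    (bc q (ygen k i) (bc q (ygen k i) (ygen k j))).1 =
      FreeAlgebra.ι k i * (bc q (ygen k i) (ygen k j)).1 -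
        (q i i * q i j) • ((bc q (ygen k i) (ygen k j)).1 * FreeAlgebra.ι k i) := by
  rw [bc_fst, bc_snd, ygen_snd, ygen_snd, qForm_add_right, qForm_single_single,
    qForm_single_single]
  rfl

end BraidedCommutator

section Representation

variable {k : Type*} [CommRing k]

def shiftMatrix3 : Matrix (Fin 3) (Fin 3) k := !![0, 1, 0; 0, 0, 1; 0, 0, 0]

def weightedCycleMatrix3 (ζ : k) : Matrix (Fin 3) (Fin 3) k := !![0, ζ, 0; 0, 0, -ζ ^ 2; 1, 0, 0]

theorem shiftMatrix3_pow_three : (shiftMatrix3 : Matrix (Fin 3) (Fin 3) k) ^ 3 = 0 := by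
  ext i j
  fin_cases i <;> fin_cases j <;> simp [shiftMatrix3, pow_three]

theorem weightedCycleMatrix3_serre {ζ : k} (hζ : ζ ^ 2 + ζ + 1 = 0) (lam : k) :
    let X := lam • shiftMatrix3
    let Y := weightedCycleMatrix3 ζ
    Y * (Y * X - ζ • (X * Y)) - (-ζ * ζ) • ((Y * X - ζ • (X * Y)) * Y) = lam • 1 := by
  simp only [shiftMatrix3, weightedCycleMatrix3, Matrix.smul_of, Matrix.smul_cons,
    Matrix.one_fin_three]
  ext i j
  fin_cases i <;> fin_cases j <;> simp <;> grind

end Representation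

theorem statement_8_general {k : Type*} [Field k]
    (ζ : k) (hζ : IsPrimitiveRoot ζ 3)
    (lam : k)
    (q : Fin 2 → Fin 2 → k) (hq : q = ![![ζ, -ζ], ![ζ, -ζ]]) :
    (1 : FreeAlgebra k (Fin 2)) ∉ TwoSidedIdeal.span
      ({FreeAlgebra.ι k (0 : Fin 2) ^ 3,
        (bc q (ygen k 1) (bc q (ygen k 1) (ygen k 0))).1 - algebraMap k (FreeAlgebra k (Fin 2)) lam} : Set (FreeAlgebra k (Fin 2))) := by
  have hζ_cyclotomic : ζ ^ 2 + ζ + 1 = 0 := by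
    have hgeom := hζ.geom_sum_eq_zero (by norm_num)
    simp only [Finset.sum_range_succ, Finset.sum_range_zero] at hgeom
    linear_combination hgeom
  let φ : FreeAlgebra k (Fin 2) →ₐ[k] Matrix (Fin 3) (Fin 3) k :=
    FreeAlgebra.lift k ![lam • shiftMatrix3, weightedCycleMatrix3 ζ]
  refine TwoSidedIdeal.one_notMem_span_of_forall_map_eq_zero φ.toRingHom ?_
  rintro x (rfl | rfl)
  · simp [φ, smul_pow, shiftMatrix3_pow_three]
  · subst hq
    rw [bc_ygen_bc_ygen_ygen_fst, bc_ygen_ygen_fst]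
    simpa [φ, Algebra.algebraMap_eq_smul_one, sub_eq_zero] using weightedCycleMatrix3_serre hζ_cyclotomic lam

theorem statement_8 {k : Type*} [Field k] [IsAlgClosed k] [CharZero k]
    (ζ : k) (hζ : IsPrimitiveRoot ζ 3)
    (lam : k)
    (q : Fin 2 → Fin 2 → k) (hq : q = ![![ζ, -ζ], ![ζ, -ζ]]) :
    (1 : FreeAlgebra k (Fin 2)) ∉ TwoSidedIdeal.span
      ({FreeAlgebra.ι k (0 : Fin 2) ^ 3,
        (bc q (ygen k 1) (bc q (ygen k 1) (ygen k 0))).1 - algebraMap k (FreeAlgebra k (Fin 2)) lam} : Set (FreeAlgebra k (Fin 2))) :=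
  statement_8_general ζ hζ lam q hq
end

section
/- Let k be an algebraically closed field of characteristic 0, q ∈ k a primitive 4th root of unity (q² = −1), and b ∈ {q, −q}. Let the 3×3 braiding matrix be q_{11} = q, q_{12} = −1, q_{13} = b, q_{21} = q, q_{22} = −1, q_{23} = −q, q_{31} = −b, q_{32} = −1, q_{33} = −q (super type A₃). Then for every λ, λ′ ∈ k, the quotient of the free algebra k⟨y_1,y_2,y_3⟩ by the two-sided ideal generated by y_2², y_{13}, [y_{(13)}, y_2]_c, y_{112} − λ, and y_{332} − λ′ is a nontrivial algebra. -/
/-! ### Auxiliary 4×4 matrices giving a representation that kills all five relations -/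

/-- Shift-type lower-triangular 4×4 matrix. -/
private def sh4 {k : Type*} [Field k] (c0 c1 c2 : k) : Matrix (Fin 4) (Fin 4) k :=
  !![0,0,0,0; c0,0,0,0; 0,c1,0,0; 0,0,c2,0]

/-- The matrix representing the middle generator `y₂`. -/
private def my2 {k : Type*} [Field k] (q₀ : k) : Matrix (Fin 4) (Fin 4) k :=
  !![0,0,-q₀,0; 0,0,0,1; 0,0,0,0; 0,0,0,0]

private def mW {k : Type*} [Field k] (q₀ t : k) : Matrix (Fin 4) (Fin 4) k :=
  !![0, -(q₀*t), 0, 0; 0,0,0,0; 0,0,0, q₀*t; 0,0,0,0]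

private def mV {k : Type*} [Field k] (q₀ b s t : k) : Matrix (Fin 4) (Fin 4) k :=
  !![-(q₀*b*s*t),0,0,0; 0, -(q₀*s*t),0,0; 0,0, q₀*b*s*t, 0; 0,0,0, q₀*s*t]

private def mU {k : Type*} [Field k] (q₀ s : k) : Matrix (Fin 4) (Fin 4) k :=
  !![0, -(q₀*s), 0, 0; 0, 0, s - q₀*s, 0; 0, 0, 0, s; 0,0,0,0]

private def mU2 {k : Type*} [Field k] (q₀ b t : k) : Matrix (Fin 4) (Fin 4) k :=
  !![0, -(q₀*t), 0, 0; 0, 0, -(q₀*b*t) - b*t, 0; 0, 0, 0, t; 0,0,0,0]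

section MatrixLemmas

variable {k : Type*} [Field k] (q₀ b s t lam lam2 : k)

set_option maxHeartbeats 1000000

private lemma L1 : (my2 q₀ : Matrix (Fin 4) (Fin 4) k) * my2 q₀ = 0 := by
  ext i j
  fin_cases i <;> fin_cases j <;>
    simp [my2, Matrix.mul_apply, Fin.sum_univ_four, Matrix.vecHead, Matrix.vecTail]

private lemma L2 (hb2 : b^2 = -1) :
    (sh4 s s s : Matrix (Fin 4) (Fin 4) k) * sh4 (b*t) t (-(b*t))
      - b • (sh4 (b*t) t (-(b*t)) * sh4 s s s) = 0 := by
  ext i j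
  fin_cases i <;> fin_cases j <;>
    simp [sh4, Matrix.sub_apply, Matrix.smul_apply, Matrix.mul_apply, Fin.sum_univ_four,
      Matrix.vecHead, Matrix.vecTail, smul_eq_mul] <;>
    first
      | ring1
      | linear_combination (s*t) * hb2
      | linear_combination (-(s*t)) * hb2

private lemma LW (hq2 : q₀^2 = -1) :
    (my2 q₀ : Matrix (Fin 4) (Fin 4) k) * sh4 (b*t) t (-(b*t))
      + q₀ • (sh4 (b*t) t (-(b*t)) * my2 q₀) = mW q₀ t := by
  ext i j
  fin_cases i <;> fin_cases j <;>
    simp [sh4, my2, mW, Matrix.add_apply, Matrix.smul_apply, Matrix.mul_apply, Fin.sum_univ_four,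
      Matrix.vecHead, Matrix.vecTail, smul_eq_mul] <;>
    first
      | ring1
      | linear_combination (b*t) * hq2
      | linear_combination (-(b*t)) * hq2

private lemma LV (hq2 : q₀^2 = -1) :
    (sh4 s s s : Matrix (Fin 4) (Fin 4) k) * mW q₀ t + b • (mW q₀ t * sh4 s s s)
      = mV q₀ b s t := by
  ext i j
  fin_cases i <;> fin_cases j <;>
    simp [sh4, mW, mV, Matrix.add_apply, Matrix.smul_apply, Matrix.mul_apply, Fin.sum_univ_four,
      Matrix.vecHead, Matrix.vecTail, smul_eq_mul] <;>
    first
      | ring1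
      | linear_combination (b^2*s*t) * hq2
      | linear_combination (-(b^2*s*t)) * hq2
      | linear_combination (b*s*t) * hq2
      | linear_combination (-(b*s*t)) * hq2

private lemma L3 :
    (mV q₀ b s t : Matrix (Fin 4) (Fin 4) k) * my2 q₀ + my2 q₀ * mV q₀ b s t = 0 := by
  ext i j
  fin_cases i <;> fin_cases j <;>
    simp [mV, my2, Matrix.add_apply, Matrix.mul_apply, Fin.sum_univ_four,
      Matrix.vecHead, Matrix.vecTail] <;>
    ring1

private lemma LU :
    (sh4 s s s : Matrix (Fin 4) (Fin 4) k) * my2 q₀ + my2 q₀ * sh4 s s s = mU q₀ s := by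
  ext i j
  fin_cases i <;> fin_cases j <;>
    simp [sh4, my2, mU, Matrix.add_apply, Matrix.mul_apply, Fin.sum_univ_four,
      Matrix.vecHead, Matrix.vecTail] <;>
    ring1

private lemma L4 (hq2 : q₀^2 = -1) (hs : s^2 = lam) :
    (sh4 s s s : Matrix (Fin 4) (Fin 4) k) * mU q₀ s + q₀ • (mU q₀ s * sh4 s s s)
      = lam • (1 : Matrix (Fin 4) (Fin 4) k) := by
  ext i j
  fin_cases i <;> fin_cases j <;>
    simp [sh4, mU, Matrix.add_apply, Matrix.smul_apply, Matrix.mul_apply, Fin.sum_univ_four,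
      Matrix.vecHead, Matrix.vecTail, Matrix.one_apply, smul_eq_mul] <;>
    first
      | ring1
      | linear_combination (-lam) * hq2 + (-(q₀^2)) * hs
      | linear_combination lam * hq2 + (q₀^2) * hs
      | linear_combination hs
      | linear_combination -hs

private lemma LU2 :
    (sh4 (b*t) t (-(b*t)) : Matrix (Fin 4) (Fin 4) k) * my2 q₀
      + my2 q₀ * sh4 (b*t) t (-(b*t)) = mU2 q₀ b t := by
  ext i j
  fin_cases i <;> fin_cases j <;>
    simp [sh4, my2, mU2, Matrix.add_apply, Matrix.mul_apply, Fin.sum_univ_four,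
      Matrix.vecHead, Matrix.vecTail] <;>
    ring1

private lemma L5 (hq2 : q₀^2 = -1) (hb2 : b^2 = -1) (ht : t^2 = b*lam2) :
    (sh4 (b*t) t (-(b*t)) : Matrix (Fin 4) (Fin 4) k) * mU2 q₀ b t
      - q₀ • (mU2 q₀ b t * sh4 (b*t) t (-(b*t)))
      = lam2 • (1 : Matrix (Fin 4) (Fin 4) k) := by
  ext i j
  fin_cases i <;> fin_cases j <;>
    simp [sh4, mU2, Matrix.sub_apply, Matrix.smul_apply, Matrix.mul_apply, Fin.sum_univ_four,
      Matrix.vecHead, Matrix.vecTail, Matrix.one_apply, smul_eq_mul] <;>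
    first
      | ring1
      | linear_combination (b^2*lam2) * hq2 + (-lam2) * hb2 + (q₀^2*b) * ht
      | linear_combination (-(b^2*lam2)) * hq2 + lam2 * hb2 + (-(q₀^2*b)) * ht
      | linear_combination (-lam2) * hb2 + (-b) * ht
      | linear_combination lam2 * hb2 + b * ht

end MatrixLemmas

set_option maxHeartbeats 1000000

theorem statement_12 {k : Type*} [Field k] [IsAlgClosed k] [CharZero k]
    (q₀ : k) (hq₀ : IsPrimitiveRoot q₀ 4) (b : k) (hb : b = q₀ ∨ b = -q₀)
    (lam lam2 : k)
    (q : Fin 3 → Fin 3 → k) (hq : q = ![![q₀, -1, b], ![q₀, -1, -q₀], ![-b, -1, -q₀]]) :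
    (1 : FreeAlgebra k (Fin 3)) ∉ TwoSidedIdeal.span
      ({FreeAlgebra.ι k (1 : Fin 3) ^ 2,
        (bc q (ygen k 0) (ygen k 2)).1,
        (bc q (bc q (ygen k 0) (bc q (ygen k 1) (ygen k 2))) (ygen k 1)).1,
        (bc q (ygen k 0) (bc q (ygen k 0) (ygen k 1))).1 - algebraMap k (FreeAlgebra k (Fin 3)) lam,
        (bc q (ygen k 2) (bc q (ygen k 2) (ygen k 1))).1 - algebraMap k (FreeAlgebra k (Fin 3)) lam2} : Set (FreeAlgebra k (Fin 3))) := by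
  classical
  -- basic scalar identities
  have h4 : q₀ ^ 4 = 1 := hq₀.pow_eq_one
  have hne : q₀ ^ 2 ≠ 1 := hq₀.pow_ne_one_of_pos_of_lt (by norm_num) (by norm_num)
  have hq2 : q₀ ^ 2 = -1 := by
    have h0 : (q₀ ^ 2 - 1) * (q₀ ^ 2 + 1) = 0 := by linear_combination h4
    rcases mul_eq_zero.mp h0 with h | h
    · exact absurd (by linear_combination h) hne
    · linear_combination h
  have hb2 : b ^ 2 = -1 := by
    rcases hb with rfl | rfl
    · exact hq2
    · calc (-q₀) ^ 2 = q₀ ^ 2 := by ring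
        _ = -1 := hq2
  obtain ⟨s, hs⟩ := IsAlgClosed.exists_pow_nat_eq lam (n := 2) (by norm_num)
  obtain ⟨t, ht⟩ := IsAlgClosed.exists_pow_nat_eq (b * lam2) (n := 2) (by norm_num)
  -- the representation
  set Φ : FreeAlgebra k (Fin 3) →ₐ[k] Matrix (Fin 4) (Fin 4) k :=
    FreeAlgebra.lift k ![sh4 s s s, my2 q₀, sh4 (b*t) t (-(b*t))] with hΦ
  have hΦ0 : Φ (FreeAlgebra.ι k 0) = sh4 s s s := by
    rw [hΦ, FreeAlgebra.lift_ι_apply]; rfl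
  have hΦ1 : Φ (FreeAlgebra.ι k 1) = my2 q₀ := by
    rw [hΦ, FreeAlgebra.lift_ι_apply]; rfl
  have hΦ2 : Φ (FreeAlgebra.ι k 2) = sh4 (b*t) t (-(b*t)) := by
    rw [hΦ, FreeAlgebra.lift_ι_apply]; rfl
  -- coefficient values of the braiding form
  have hqf12 : qForm q (fun j => if j = (1:Fin 3) then 1 else 0)
      (fun j => if j = (2:Fin 3) then 1 else 0) = -q₀ := by
    subst hq; simp [qForm, Fin.prod_univ_three, Matrix.vecHead, Matrix.vecTail]
  have hqf02 : qForm q (fun j => if j = (0:Fin 3) then 1 else 0)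
      (fun j => if j = (2:Fin 3) then 1 else 0) = b := by
    subst hq; simp [qForm, Fin.prod_univ_three, Matrix.vecHead, Matrix.vecTail]
  have hqf0_12 : qForm q (fun j => if j = (0:Fin 3) then 1 else 0)
      (fun i => (if i = (1:Fin 3) then 1 else 0) + (if i = (2:Fin 3) then 1 else 0)) = -b := by
    subst hq; simp [qForm, Fin.prod_univ_three, Matrix.vecHead, Matrix.vecTail]
  have hqf012_1 : qForm q
      (fun i => (if i = (0:Fin 3) then 1 else 0) +
        ((if i = (1:Fin 3) then 1 else 0) + (if i = (2:Fin 3) then 1 else 0)))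
      (fun j => if j = (1:Fin 3) then 1 else 0) = -1 := by
    subst hq; simp [qForm, Fin.prod_univ_three, Matrix.vecHead, Matrix.vecTail]
  have hqf01 : qForm q (fun j => if j = (0:Fin 3) then 1 else 0)
      (fun j => if j = (1:Fin 3) then 1 else 0) = -1 := by
    subst hq; simp [qForm, Fin.prod_univ_three, Matrix.vecHead, Matrix.vecTail]
  have hqf0_01 : qForm q (fun j => if j = (0:Fin 3) then 1 else 0)
      (fun i => (if i = (0:Fin 3) then 1 else 0) + (if i = (1:Fin 3) then 1 else 0)) = -q₀ := by
    subst hq; simp [qForm, Fin.prod_univ_three, Matrix.vecHead, Matrix.vecTail]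
  have hqf21 : qForm q (fun j => if j = (2:Fin 3) then 1 else 0)
      (fun j => if j = (1:Fin 3) then 1 else 0) = -1 := by
    subst hq; simp [qForm, Fin.prod_univ_three, Matrix.vecHead, Matrix.vecTail]
  have hqf2_21 : qForm q (fun j => if j = (2:Fin 3) then 1 else 0)
      (fun i => (if i = (2:Fin 3) then 1 else 0) + (if i = (1:Fin 3) then 1 else 0)) = q₀ := by
    subst hq; simp [qForm, Fin.prod_univ_three, Matrix.vecHead, Matrix.vecTail]
  -- unfolded forms of the relations
  have hg2 : (bc q (ygen k 0) (ygen k 2)).1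
      = FreeAlgebra.ι k 0 * FreeAlgebra.ι k 2 - b • (FreeAlgebra.ι k 2 * FreeAlgebra.ι k 0) := by
    simp only [bc, ygen]
    rw [hqf02]
  have hg3 : (bc q (bc q (ygen k 0) (bc q (ygen k 1) (ygen k 2))) (ygen k 1)).1
      = (let w := FreeAlgebra.ι k 1 * FreeAlgebra.ι k 2 + q₀ • (FreeAlgebra.ι k 2 * FreeAlgebra.ι k 1);
         let v := FreeAlgebra.ι k 0 * w + b • (w * FreeAlgebra.ι k 0);
         v * FreeAlgebra.ι k 1 + FreeAlgebra.ι k 1 * v) := by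
    simp only [bc, ygen]
    rw [hqf12, hqf0_12, hqf012_1]
    simp only [neg_smul, sub_neg_eq_add, one_smul, neg_neg]
  have hg4 : (bc q (ygen k 0) (bc q (ygen k 0) (ygen k 1))).1
      = (let u := FreeAlgebra.ι k 0 * FreeAlgebra.ι k 1 + FreeAlgebra.ι k 1 * FreeAlgebra.ι k 0;
         FreeAlgebra.ι k 0 * u + q₀ • (u * FreeAlgebra.ι k 0)) := by
    simp only [bc, ygen]
    rw [hqf01, hqf0_01]
    simp only [neg_smul, sub_neg_eq_add, one_smul, neg_neg]
  have hg5 : (bc q (ygen k 2) (bc q (ygen k 2) (ygen k 1))).1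
      = (let u := FreeAlgebra.ι k 2 * FreeAlgebra.ι k 1 + FreeAlgebra.ι k 1 * FreeAlgebra.ι k 2;
         FreeAlgebra.ι k 2 * u - q₀ • (u * FreeAlgebra.ι k 2)) := by
    simp only [bc, ygen]
    rw [hqf21, hqf2_21]
    simp only [neg_smul, sub_neg_eq_add, one_smul, neg_neg]
  -- each relation is killed by Φ
  intro hmem
  have hsub : ({FreeAlgebra.ι k (1 : Fin 3) ^ 2,
        (bc q (ygen k 0) (ygen k 2)).1,
        (bc q (bc q (ygen k 0) (bc q (ygen k 1) (ygen k 2))) (ygen k 1)).1,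
        (bc q (ygen k 0) (bc q (ygen k 0) (ygen k 1))).1 - algebraMap k (FreeAlgebra k (Fin 3)) lam,
        (bc q (ygen k 2) (bc q (ygen k 2) (ygen k 1))).1 - algebraMap k (FreeAlgebra k (Fin 3)) lam2} : Set (FreeAlgebra k (Fin 3)))
      ⊆ (TwoSidedIdeal.ker Φ : Set (FreeAlgebra k (Fin 3))) := by
    intro x hx
    rw [SetLike.mem_coe, TwoSidedIdeal.mem_ker]
    simp only [Set.mem_insert_iff, Set.mem_singleton_iff] at hx
    rcases hx with rfl | rfl | rfl | rfl | rfl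
    · rw [map_pow, hΦ1, pow_two, L1]
    · rw [hg2, map_sub, map_smul, map_mul, map_mul, hΦ0, hΦ2, L2 b s t hb2]
    · rw [hg3]
      simp only [map_add, map_mul, map_smul, hΦ0, hΦ1, hΦ2]
      rw [LW q₀ b t hq2, LV q₀ b s t hq2, L3]
    · rw [hg4]
      simp only [map_sub, map_add, map_mul, map_smul, hΦ0, hΦ1, AlgHom.commutes]
      rw [LU q₀ s, L4 q₀ s lam hq2 hs, Algebra.algebraMap_eq_smul_one, sub_self]
    · rw [hg5]
      simp only [map_sub, map_add, map_mul, map_smul, hΦ1, hΦ2, AlgHom.commutes]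
      rw [LU2 q₀ b t, L5 q₀ b t lam2 hq2 hb2 ht, Algebra.algebraMap_eq_smul_one, sub_self]
  have h1 : (1 : FreeAlgebra k (Fin 3)) ∈ TwoSidedIdeal.ker Φ :=
    TwoSidedIdeal.mem_span_iff.mp hmem _ hsub
  rw [TwoSidedIdeal.mem_ker, map_one] at h1
  exact one_ne_zero h1
end

section
/- Let k be an algebraically closed field of characteristic 0 and q ∈ k a primitive 4th root of unity (q² = −1). Let the 3×3 braiding matrix have all three rows equal to (−1, q, −1), i.e. q_{i1} = −1, q_{i2} = q, q_{i3} = −1 for i = 1,2,3 (super type A₃). Then for every λ, λ′ ∈ k, the quotient of the free algebra k⟨y_1,y_2,y_3⟩ by the two-sided ideal generated by y_1², y_3², y_{13}, y_{221} − λ, and y_{223} − λ′ is a nontrivial algebra. -/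
set_option maxHeartbeats 1000000
set_option linter.unreachableTactic false
set_option linter.unusedTactic false
set_option linter.unnecessarySimpa false

noncomputable def Nmat {k : Type*} [Field k] (q₀ : k) : Matrix (Fin 4) (Fin 4) k :=
  !![1, q₀-1, q₀, 0; 0, -1, q₀-1, q₀; q₀, 0, 1, 1-q₀; 1-q₀, q₀, 0, -1]

noncomputable def Ymat {k : Type*} [Field k] (q₀ : k) : Matrix (Fin 4) (Fin 4) k :=
  !![1, 0, 0, 0; 0, q₀, 0, 0; 0, 0, -1, 0; 0, 0, 0, -q₀]

theorem Nsq {k : Type*} [Field k] (q₀ : k) (hq2 : q₀ ^ 2 = -1) :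
    Nmat q₀ * Nmat q₀ = 0 := by
  ext i j
  fin_cases i <;> fin_cases j <;>
    simp [Nmat, Matrix.mul_apply, Fin.sum_univ_four]
  all_goals try ring1
  all_goals try linear_combination hq2
  all_goals try linear_combination -hq2
  all_goals try linear_combination 2*hq2
  all_goals try linear_combination -2*hq2
  all_goals try linear_combination q₀*hq2
  all_goals try linear_combination -q₀*hq2
  all_goals try linear_combination (1+q₀)*hq2
  all_goals try linear_combination -(1+q₀)*hq2
  all_goals try linear_combination (q₀-1)*hq2
  all_goals try linear_combination (1-q₀)*hq2

theorem Trel {k : Type*} [Field k] (q₀ ν lam : k) (hq2 : q₀ ^ 2 = -1)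
    (hν : 2 * (1 + q₀) * ν = lam) :
    Ymat q₀ * (Ymat q₀ * (ν • Nmat q₀) - (-1 : k) • ((ν • Nmat q₀) * Ymat q₀)) -
      (-q₀) • ((Ymat q₀ * (ν • Nmat q₀) - (-1 : k) • ((ν • Nmat q₀) * Ymat q₀)) * Ymat q₀) -
      lam • (1 : Matrix (Fin 4) (Fin 4) k) = 0 := by
  ext i j
  fin_cases i <;> fin_cases j <;>
    simp only [Nmat, Ymat, Matrix.sub_apply, Matrix.smul_apply, Matrix.mul_apply,
      Matrix.one_apply, Fin.sum_univ_four, Matrix.zero_apply, smul_eq_mul,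
      Matrix.cons_val', Matrix.cons_val_zero, Matrix.cons_val_one, Matrix.head_cons,
      Matrix.empty_val', Matrix.cons_val_fin_one, Matrix.head_fin_const,
      Matrix.cons_val_two, Matrix.cons_val_three, Matrix.tail_cons, Fin.isValue,
      Matrix.of_apply] <;>
    norm_num [Fin.ext_iff]
  all_goals try ring1
  all_goals try linear_combination hν
  all_goals try linear_combination -hν
  all_goals try linear_combination hν + ν*hq2
  all_goals try linear_combination hν - ν*hq2
  all_goals try linear_combination -hν + ν*hq2
  all_goals try linear_combination -hν - ν*hq2
  all_goals try linear_combination ν*hq2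
  all_goals try linear_combination -ν*hq2
  all_goals try linear_combination q₀*ν*hq2
  all_goals try linear_combination -q₀*ν*hq2
  all_goals try linear_combination hν + q₀*ν*hq2
  all_goals try linear_combination -hν - q₀*ν*hq2
  all_goals try linear_combination 2*hν + q₀*ν*hq2
  all_goals try linear_combination 2*hν + ((-2) + q₀ + 2*q₀^2)*ν*hq2
  all_goals try linear_combination 3*hν + ((-3) - q₀ + q₀^2)*ν*hq2
  all_goals try linear_combination -2*hν + (q₀^2 - q₀ - 1)*ν*hq2
  all_goals try linear_combination -hν - (3*q₀+2)*ν*hq2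
  all_goals try linear_combination -2*hν - (q₀ + q₀^2 - 1)*ν*hq2
  all_goals try linear_combination hν - 2*(1+q₀)*ν*hq2
  all_goals try linear_combination (1 - q₀^2)*ν*hq2
  all_goals try linear_combination (q₀^2 - 1)*ν*hq2

theorem statement_14 {k : Type*} [Field k] [IsAlgClosed k] [CharZero k]
    (q₀ : k) (hq₀ : IsPrimitiveRoot q₀ 4)
    (lam lam2 : k)
    (q : Fin 3 → Fin 3 → k) (hq : q = ![![-1, q₀, -1], ![-1, q₀, -1], ![-1, q₀, -1]]) :
    (1 : FreeAlgebra k (Fin 3)) ∉ TwoSidedIdeal.span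
      ({FreeAlgebra.ι k (0 : Fin 3) ^ 2,
        FreeAlgebra.ι k (2 : Fin 3) ^ 2,
        (bc q (ygen k 0) (ygen k 2)).1,
        (bc q (ygen k 1) (bc q (ygen k 1) (ygen k 0))).1 - algebraMap k (FreeAlgebra k (Fin 3)) lam,
        (bc q (ygen k 1) (bc q (ygen k 1) (ygen k 2))).1 - algebraMap k (FreeAlgebra k (Fin 3)) lam2} : Set (FreeAlgebra k (Fin 3))) := by
  intro hmem
  have hq2 : q₀ ^ 2 = -1 :=
    (hq₀.pow (by norm_num) (by norm_num : 4 = 2 * 2)).eq_neg_one_of_two_right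
  have hne : (2 : k) * (1 + q₀) ≠ 0 := by
    intro h
    rcases mul_eq_zero.mp h with h | h
    · exact two_ne_zero h
    · have : q₀ = -1 := by linear_combination h
      rw [this] at hq2; norm_num at hq2
  set ν := lam / (2 * (1 + q₀)) with hνdef
  set ν' := lam2 / (2 * (1 + q₀)) with hν'def
  have hν : 2 * (1 + q₀) * ν = lam := by rw [hνdef, mul_div_cancel₀ _ hne]
  have hν' : 2 * (1 + q₀) * ν' = lam2 := by rw [hν'def, mul_div_cancel₀ _ hne]
  set f : Fin 3 → Matrix (Fin 4) (Fin 4) k := ![ν • Nmat q₀, Ymat q₀, ν' • Nmat q₀] with hf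
  set φ : FreeAlgebra k (Fin 3) →ₐ[k] Matrix (Fin 4) (Fin 4) k := FreeAlgebra.lift k f with hφ
  have hφ0 : φ (FreeAlgebra.ι k 0) = ν • Nmat q₀ := by simp [hφ, hf]
  have hφ1 : φ (FreeAlgebra.ι k 1) = Ymat q₀ := by simp [hφ, hf]
  have hφ2 : φ (FreeAlgebra.ι k 2) = ν' • Nmat q₀ := by simp [hφ, hf]
  have e02 : qForm q (fun j : Fin 3 => if j = 0 then 1 else 0)
      (fun j : Fin 3 => if j = 2 then 1 else 0) = -1 := by
    simp [qForm, hq, Fin.prod_univ_three]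
  have e10 : qForm q (fun j : Fin 3 => if j = 1 then 1 else 0)
      (fun j : Fin 3 => if j = 0 then 1 else 0) = -1 := by
    simp [qForm, hq, Fin.prod_univ_three]
  have e110 : qForm q (fun j : Fin 3 => if j = 1 then 1 else 0)
      (fun i : Fin 3 => (if i = 1 then 1 else 0) + if i = 0 then 1 else 0) = -q₀ := by
    simp [qForm, hq, Fin.prod_univ_three]
  have e12 : qForm q (fun j : Fin 3 => if j = 1 then 1 else 0)
      (fun j : Fin 3 => if j = 2 then 1 else 0) = -1 := by
    simp [qForm, hq, Fin.prod_univ_three]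
  have e112 : qForm q (fun j : Fin 3 => if j = 1 then 1 else 0)
      (fun i : Fin 3 => (if i = 1 then 1 else 0) + if i = 2 then 1 else 0) = -q₀ := by
    simp [qForm, hq, Fin.prod_univ_three]
  rw [TwoSidedIdeal.mem_span_iff] at hmem
  have key := hmem (TwoSidedIdeal.ker φ.toRingHom) ?_
  · rw [TwoSidedIdeal.mem_ker] at key
    have h1 : (1 : Matrix (Fin 4) (Fin 4) k) = 0 := by simp at key
    have := congrFun (congrFun h1 0) 0
    simp [Matrix.one_apply] at this
  · intro x hx
    simp only [Set.mem_insert_iff, Set.mem_singleton_iff] at hx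
    rw [SetLike.mem_coe, TwoSidedIdeal.mem_ker]
    have hmul : ∀ a b : k, (a • Nmat q₀) * (b • Nmat q₀) = (0 : Matrix (Fin 4) (Fin 4) k) := by
      intro a b
      rw [smul_mul_smul_comm, Nsq q₀ hq2, smul_zero]
    rcases hx with rfl | rfl | rfl | rfl | rfl
    · show φ _ = 0
      rw [map_pow, hφ0, sq, hmul]
    · show φ _ = 0
      rw [map_pow, hφ2, sq, hmul]
    · show φ _ = 0
      simp only [bc, ygen]
      rw [e02]
      rw [map_sub, map_mul, map_smul, map_mul, hφ0, hφ2, hmul, hmul, smul_zero, sub_zero]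
    · show φ _ = 0
      simp only [bc, ygen]
      rw [e10, e110]
      rw [map_sub, map_sub, map_smul, map_mul, map_sub, map_mul, map_smul, map_mul,
        map_mul, map_sub, map_mul, map_smul, map_mul, hφ0, hφ1, AlgHom.commutes,
        Algebra.algebraMap_eq_smul_one]
      exact Trel q₀ ν lam hq2 hν
    · show φ _ = 0
      simp only [bc, ygen]
      rw [e12, e112]
      rw [map_sub, map_sub, map_smul, map_mul, map_sub, map_mul, map_smul, map_mul,
        map_mul, map_sub, map_mul, map_smul, map_mul, hφ2, hφ1, AlgHom.commutes,
        Algebra.algebraMap_eq_smul_one]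
      exact Trel q₀ ν' lam2 hq2 hν'
end
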